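/- arXiv:2512.05357 — 5 statements merged into one kernel-verified Lean document; each statement's English description precedes it below -/
import Mathlib

section
/- Every finite preorder can be order-embedded into the asymptotic cohomomorphism preorder: for every preorder ≤_M on a finite set M there exists a map F from M to finite simple graphs such that for all x, y ∈ M, x ≤_M y if and only if F(x) ≲_𝒢 F(y). -/
open Filter

/-- A bundled finite simple graph. -/
structure FinGraph where
  V : Type
  [fintypeV : Fintype V]
  G : SimpleGraph V

attribute [instance] FinGraph.fintypeV

namespace FinGraph

/-- Helper constructor. -/
def mk' (V : Type) [Fintype V] (G : SimpleGraph V) : FinGraph := ⟨V, G⟩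

/-- Strong product of simple graphs. -/
def strongProdAdj {α β : Type} (G : SimpleGraph α) (H : SimpleGraph β) :
    SimpleGraph (α × β) where
  Adj x y := x ≠ y ∧ (G.Adj x.1 y.1 ∨ x.1 = y.1) ∧ (H.Adj x.2 y.2 ∨ x.2 = y.2)
  symm := by
    constructor
    rintro x y ⟨hne, h1, h2⟩
    refine ⟨hne.symm, ?_, ?_⟩
    · rcases h1 with h | h
      · exact Or.inl h.symm
      · exact Or.inr h.symm
    · rcases h2 with h | h
      · exact Or.inl h.symm
      · exact Or.inr h.symm
  loopless := by constructor; rintro x ⟨h, -⟩; exact h rfl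

/-- The `n`-th strong power of a simple graph, on vertex set `Fin n → α`. -/
def strongPowAdj {α : Type} (G : SimpleGraph α) (n : ℕ) : SimpleGraph (Fin n → α) where
  Adj x y := x ≠ y ∧ ∀ i, G.Adj (x i) (y i) ∨ x i = y i
  symm := by
    constructor
    rintro x y ⟨hne, h⟩
    refine ⟨hne.symm, fun i => ?_⟩
    rcases h i with h' | h'
    · exact Or.inl h'.symm
    · exact Or.inr h'.symm
  loopless := by constructor; rintro x ⟨h, -⟩; exact h rfl

/-- Disjoint union of simple graphs. -/
def disjUnionAdj {α β : Type} (G : SimpleGraph α) (H : SimpleGraph β) :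
    SimpleGraph (α ⊕ β) where
  Adj x y := (∃ a b, x = Sum.inl a ∧ y = Sum.inl b ∧ G.Adj a b) ∨
             (∃ a b, x = Sum.inr a ∧ y = Sum.inr b ∧ H.Adj a b)
  symm := by
    constructor
    rintro x y (⟨a, b, rfl, rfl, h⟩ | ⟨a, b, rfl, rfl, h⟩)
    · exact Or.inl ⟨b, a, rfl, rfl, h.symm⟩
    · exact Or.inr ⟨b, a, rfl, rfl, h.symm⟩
  loopless := by
    constructor
    rintro x (⟨a, b, rfl, h, hadj⟩ | ⟨a, b, rfl, h, hadj⟩)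
    · cases Sum.inl.inj h; exact hadj.ne rfl
    · cases Sum.inr.inj h; exact hadj.ne rfl

/-- Bundled strong product `G ⊠ H`. -/
def sprod (A B : FinGraph) : FinGraph := mk' (A.V × B.V) (strongProdAdj A.G B.G)

/-- Bundled `n`-th strong power `G^{⊠ n}`. -/
def spow (A : FinGraph) (n : ℕ) : FinGraph := mk' (Fin n → A.V) (strongPowAdj A.G n)

/-- Bundled disjoint union `G ⊔ H`. -/
def dUnion (A B : FinGraph) : FinGraph := mk' (A.V ⊕ B.V) (disjUnionAdj A.G B.G)

/-- Bundled complement graph. -/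
def compl (A : FinGraph) : FinGraph := mk' A.V A.Gᶜ

/-- Graph join `G + H`: the complement of the disjoint union of the complements. -/
def join (A B : FinGraph) : FinGraph := (A.compl.dUnion B.compl).compl

/-- The edgeless graph `E_n` on `n` vertices. -/
def edgeless (n : ℕ) : FinGraph := mk' (Fin n) ⊥

/-- `cohomLE A B`: there is a cohomomorphism from `A` to `B`, i.e. a graph homomorphism
from the complement of `A` to the complement of `B`. -/
def cohomLE (A B : FinGraph) : Prop := Nonempty (A.Gᶜ →g B.Gᶜ)

/-- Asymptotic cohomomorphism preorder: `A ≲ B` iff there is `f : ℕ → ℕ` with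
`f n / n → 0` and `A^{⊠ n} ≤ B^{⊠ (n + f n)}` for all `n`. -/
def asympCohomLE (A B : FinGraph) : Prop :=
  ∃ f : ℕ → ℕ, Tendsto (fun n => (f n : ℝ) / (n : ℝ)) atTop (nhds 0) ∧
    ∀ n, cohomLE (A.spow n) (B.spow (n + f n))

/-- The asymptotic spectrum of graphs `Δ(𝒢)`: nonnegative real graph parameters that are
normalised on edgeless graphs, multiplicative under the strong product, additive under
disjoint union, and monotone under cohomomorphism. -/
def Delta : Set (FinGraph → ℝ) :=
  { f | (∀ A, 0 ≤ f A) ∧ (∀ n : ℕ, f (edgeless n) = n) ∧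
        (∀ A B, f (A.sprod B) = f A * f B) ∧
        (∀ A B, f (A.dUnion B) = f A + f B) ∧
        (∀ A B, cohomLE A B → f A ≤ f B) }

/-- Vertex-transitivity of a bundled graph. -/
def IsVertexTransitive (A : FinGraph) : Prop :=
  ∀ u v : A.V, ∃ e : A.G ≃g A.G, e u = v

/-- Cyclic distance between `i, j ∈ {0, …, p-1}` modulo `p`. -/
def cycDist (p i j : ℕ) : ℕ := min ((p + i - j) % p) ((p + j - i) % p)

/-- The fraction graph `E_{p/q}`: vertex set `ℤ_p`, distinct vertices adjacent iff
their cyclic distance modulo `p` is strictly less than `q`. -/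
def fracGraph (p q : ℕ) : FinGraph :=
  mk' (Fin p)
    { Adj := fun i j => i ≠ j ∧ cycDist p i j < q
      symm := by
        constructor
        rintro i j ⟨hne, hd⟩
        exact ⟨hne.symm, by simpa [cycDist, min_comm] using hd⟩
      loopless := ⟨fun i h => h.1 rfl⟩ }

/-- The complement of the projective rank `ξ̄_f(G)`: the infimum of `d/r` over all
assignments of `r`-dimensional subspaces of `ℂ^d` to the vertices such that distinct
non-adjacent vertices receive orthogonal subspaces. -/
noncomputable def xibar (A : FinGraph) : ℝ :=
  sInf { x : ℝ | ∃ d r : ℕ, 0 < d ∧ 0 < r ∧ x = (d : ℝ) / (r : ℝ) ∧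
    ∃ W : A.V → Submodule ℂ (EuclideanSpace ℂ (Fin d)),
      (∀ v, Module.finrank ℂ (W v) = r) ∧
      ∀ v w : A.V, v ≠ w → ¬ A.G.Adj v w →
        ∀ x ∈ W v, ∀ y ∈ W w, (inner ℂ x y : ℂ) = 0 }

end FinGraph

open FinGraph

/-!
Attach to each `z ∈ M` a distinct odd prime `p z`, and let `H z` (`layerGraph`) be the graph on
the `2 p z`-subsets of `Fin m`, two of them adjacent iff `p z ∤ |A ∩ B|`; `F x` (`downGraph`) is
the disjoint union of the `H z` for `z ≤ x`. If `x ≤ y`, then `F x` is an induced subgraph of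
`F y`. If `x ≰ y`, work over `𝔽_{p x}`: a cohomomorphism pulls back Haemers' fitting matrices,
and the diagonal of `H^{⊠ n} ⊠ (Hᶜ)^{⊠ n}` is independent, so `H x ≲ F x ≲ F y` would bound
`|V(H x)| = C(m, 2 p x)` by the product of the ranks of matrices fitting `F y` and `(H x)ᶜ`.
Frankl–Wilson polynomials of degree `2` (roots `0` and `p z`, for each `z ≠ x`) and `p x - 1`
(`t ^ (p x - 1) - 1`) give ranks `O(m ^ 2)` and `O(m ^ (p x - 1))`, too small once `m` is large.
-/

namespace FinGraph

open Finset Polynomial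

section Fits

variable {K V W I J : Type} [Fintype I] [Fintype J]

/-- The matrix `(p v ⬝ᵥ q w)`, of rank at most `|I|`, fits `G` in Haemers' sense. -/
def Fits (K : Type) [CommSemiring K] (G : SimpleGraph V) (I : Type) [Fintype I] : Prop :=
  ∃ p q : V → I → K, (∀ v, p v ⬝ᵥ q v ≠ 0) ∧
    ∀ v w, v ≠ w → ¬ G.Adj v w → p v ⬝ᵥ q w = 0

theorem Fits.of_compl_hom [CommSemiring K] {G : SimpleGraph V} {H : SimpleGraph W}
    (hH : Fits K H I) (φ : Gᶜ →g Hᶜ) : Fits K G I := by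
  obtain ⟨p, q, hdiag, hoff⟩ := hH
  refine ⟨p ∘ φ, q ∘ φ, fun v => hdiag (φ v), fun v w hne hnadj => ?_⟩
  obtain ⟨hne', hnadj'⟩ := φ.map_adj (show Gᶜ.Adj v w from ⟨hne, hnadj⟩)
  exact hoff _ _ hne' hnadj'

theorem Fits.strongProd [CommRing K] [IsDomain K] {G : SimpleGraph V}
    {H : SimpleGraph W} (hG : Fits K G I) (hH : Fits K H J) :
    Fits K (strongProdAdj G H) (I × J) := by
  obtain ⟨p, q, hdiag, hoff⟩ := hG
  obtain ⟨p', q', hdiag', hoff'⟩ := hH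
  have hmul : ∀ v w : V × W, (fun ij : I × J => p v.1 ij.1 * p' v.2 ij.2) ⬝ᵥ
      (fun ij => q w.1 ij.1 * q' w.2 ij.2) = (p v.1 ⬝ᵥ q w.1) * (p' v.2 ⬝ᵥ q' w.2) := by
    intro v w
    simp only [dotProduct, Fintype.sum_prod_type, Finset.sum_mul_sum]
    exact Finset.sum_congr rfl fun i _ => Finset.sum_congr rfl fun j _ => by ring
  refine ⟨_, _, fun v => (hmul v v).trans_ne (mul_ne_zero (hdiag _) (hdiag' _)),
    fun v w hne hnadj => (hmul v w).trans ?_⟩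
  by_cases h1 : v.1 = w.1
  · have h2 : v.2 ≠ w.2 := fun h2 => hne (Prod.ext h1 h2)
    rw [hoff' _ _ h2 fun hadj => hnadj ⟨hne, Or.inr h1, Or.inl hadj⟩, mul_zero]
  · by_cases hadj : G.Adj v.1 w.1
    · have h2 : ¬ (H.Adj v.2 w.2 ∨ v.2 = w.2) := fun h2 => hnadj ⟨hne, Or.inl hadj, h2⟩
      rw [not_or] at h2
      rw [hoff' _ _ h2.2 h2.1, mul_zero]
    · rw [hoff _ _ h1 hadj, zero_mul]

theorem Fits.strongPow [CommRing K] [IsDomain K] {G : SimpleGraph V}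
    (hG : Fits K G I) (n : ℕ) : Fits K (strongPowAdj G n) (Fin n → I) := by
  obtain ⟨p, q, hdiag, hoff⟩ := hG
  have hprod : ∀ x y : Fin n → V, (fun f : Fin n → I => ∏ t, p (x t) (f t)) ⬝ᵥ
      (fun f => ∏ t, q (y t) (f t)) = ∏ t, p (x t) ⬝ᵥ q (y t) := by
    intro x y
    simp only [dotProduct, ← Finset.prod_mul_distrib]
    exact (Fintype.prod_sum fun t i => p (x t) i * q (y t) i).symm
  refine ⟨_, _, fun x => (hprod x x).trans_ne (prod_ne_zero_iff.2 fun t _ => hdiag _),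
    fun x y hne hnadj => (hprod x y).trans ?_⟩
  obtain ⟨t, ht⟩ : ∃ t, ¬ (G.Adj (x t) (y t) ∨ x t = y t) := by
    by_contra! hall
    exact hnadj ⟨hne, hall⟩
  rw [not_or] at ht
  exact prod_eq_zero (mem_univ t) (hoff _ _ ht.2 ht.1)

theorem Fits.card_le_of_bot [Field K] [Fintype V] (h : Fits K (⊥ : SimpleGraph V) I) :
    Fintype.card V ≤ Fintype.card I := by
  classical
  obtain ⟨p, q, hdiag, hoff⟩ := h
  have hPQ : Matrix.of p * (Matrix.of q).transpose = Matrix.diagonal fun v => p v ⬝ᵥ q v := by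
    ext v w
    by_cases hvw : v = w
    · subst hvw
      simp [Matrix.mul_apply, dotProduct]
    · simpa [Matrix.mul_apply, hvw, dotProduct] using hoff v w hvw (by simp)
  calc Fintype.card V = (Matrix.of p * (Matrix.of q).transpose).rank := by
        rw [hPQ, Matrix.rank_diagonal, Fintype.card_congr (Equiv.subtypeUnivEquiv hdiag)]
    _ ≤ (Matrix.of p).rank := Matrix.rank_mul_le_left _ _
    _ ≤ Fintype.card I := Matrix.rank_le_card_width _

theorem strongPowAdj_disjoint {G H : SimpleGraph V} (h : Disjoint G H) (n : ℕ) :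
    Disjoint (strongPowAdj G n) (strongPowAdj H n) := by
  rw [SimpleGraph.disjoint_left] at h ⊢
  rintro x y ⟨hne, hG⟩ ⟨-, hH⟩
  obtain ⟨t, ht⟩ := Function.ne_iff.mp hne
  exact h _ _ ((hG t).resolve_right ht) ((hH t).resolve_right ht)

theorem Fits.card_le_of_disjoint [Field K] [Fintype V] {G H : SimpleGraph V}
    (hGH : Disjoint G H) (h : Fits K (strongProdAdj G H) I) :
    Fintype.card V ≤ Fintype.card I := by
  refine (h.of_compl_hom ⟨fun v => (v, v), fun {v w} hvw => ?_⟩).card_le_of_bot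
  have hne : v ≠ w := hvw.1
  refine ⟨fun h => hne (congrArg Prod.fst h), fun ⟨_, hG, hH⟩ => ?_⟩
  exact SimpleGraph.disjoint_left.1 hGH v w (hG.resolve_right hne) (hH.resolve_right hne)

end Fits

section Cohom

variable {A B C : FinGraph}

theorem cohomLE.trans (hAB : cohomLE A B) (hBC : cohomLE B C) : cohomLE A C :=
  let ⟨φ⟩ := hAB
  let ⟨ψ⟩ := hBC
  ⟨ψ.comp φ⟩

theorem cohomLE.spow (h : cohomLE A B) (n : ℕ) : cohomLE (A.spow n) (B.spow n) := by
  obtain ⟨φ⟩ := h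
  refine ⟨⟨fun x => φ ∘ x, fun {x y} hxy => ?_⟩⟩
  obtain ⟨t, hne, hnadj⟩ : ∃ t, x t ≠ y t ∧ ¬ A.G.Adj (x t) (y t) := by
    by_contra! hall
    exact hxy.2 ⟨hxy.1, fun t => (em (x t = y t)).elim Or.inr fun h => Or.inl (hall t h)⟩
  obtain ⟨hne', hnadj'⟩ := φ.map_adj (show A.Gᶜ.Adj (x t) (y t) from ⟨hne, hnadj⟩)
  exact ⟨fun h => hne' (congrFun h t), fun h => (h.2 t).elim hnadj' hne'⟩

theorem asympCohomLE_of_cohomLE (h : cohomLE A B) : asympCohomLE A B :=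
  ⟨0, by simp, fun n => h.spow n⟩

theorem cohomLE.trans_asympCohomLE (hAB : cohomLE A B) (hBC : asympCohomLE B C) :
    asympCohomLE A C :=
  let ⟨f, hf, hcoh⟩ := hBC
  ⟨f, hf, fun n => (hAB.spow n).trans (hcoh n)⟩

theorem cohomLE_of_embedding (φ : A.G ↪g B.G) : cohomLE A B :=
  ⟨(SimpleGraph.Embedding.complEquiv φ).toHom⟩

end Cohom

theorem le_mul_of_forall_pow_le {N a b : ℕ} {f : ℕ → ℕ}
    (hf : Tendsto (fun n => (f n : ℝ) / n) atTop (nhds 0))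
    (h : ∀ n, N ^ n ≤ a ^ (n + f n) * b ^ n) : N ≤ a * b := by
  rcases Nat.eq_zero_or_pos (a * b) with hab | hab
  · have h1 := h 1
    rcases mul_eq_zero.1 hab with rfl | rfl <;> simp_all
  rcases Nat.eq_zero_or_pos N with rfl | hN
  · exact Nat.zero_le _
  have ha : 0 < a := Nat.pos_of_mul_pos_right hab
  have hb : 0 < b := Nat.pos_of_mul_pos_left hab
  have hlog : ∀ n : ℕ, 1 ≤ n →
      Real.log N - Real.log ((a : ℝ) * b) ≤ (f n : ℝ) / n * Real.log a := by
    intro n hn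
    have hpow : (N : ℝ) ^ n ≤ (a : ℝ) ^ (n + f n) * (b : ℝ) ^ n := by exact_mod_cast h n
    have := Real.log_le_log (by positivity) hpow
    rw [Real.log_mul (by positivity) (by positivity), Real.log_pow, Real.log_pow,
      Real.log_pow] at this
    rw [Real.log_mul (by positivity) (by positivity), div_mul_eq_mul_div,
      le_div_iff₀ (by positivity)]
    push_cast at this
    linarith
  have hlim : Tendsto (fun n => (f n : ℝ) / n * Real.log a) atTop (nhds 0) := by
    simpa using hf.mul_const (Real.log a)
  have hle := ge_of_tendsto hlim (eventually_atTop.2 ⟨1, hlog⟩)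
  have : Real.log N ≤ Real.log ((a : ℝ) * b) := by linarith
  exact_mod_cast (Real.log_le_log_iff (by positivity) (by positivity)).1 this

/-- Haemers' bound, made asymptotic: `A^{⊠ n} ⊠ (Aᶜ)^{⊠ n}` has the independent diagonal. -/
theorem card_le_of_asympCohomLE {K I J : Type} [Field K] [Fintype I] [Fintype J]
    {A B : FinGraph} (hAB : asympCohomLE A B)
    (hB : Fits K B.G I) (hA : Fits K A.Gᶜ J) :
    Fintype.card A.V ≤ Fintype.card I * Fintype.card J := by
  obtain ⟨f, hf, hcoh⟩ := hAB
  refine le_mul_of_forall_pow_le hf fun n => ?_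
  obtain ⟨φ⟩ := hcoh n
  have hfits : Fits K (strongProdAdj (A.spow n).G (A.compl.spow n).G)
      ((Fin (n + f n) → I) × (Fin n → J)) :=
    ((hB.strongPow _).of_compl_hom φ).strongProd (hA.strongPow n)
  simpa using hfits.card_le_of_disjoint (strongPowAdj_disjoint disjoint_compl_right n)

section Intersection

variable {K V ι : Type} {m d : ℕ}

theorem natCast_card_inter_pow [CommSemiring K] (A B : Finset (Fin m)) (k : ℕ) :
    ((#(A ∩ B) : ℕ) : K) ^ k = ∑ f : Fin k → Fin m,
      (∏ j, if f j ∈ A then (1 : K) else 0) * ∏ j, if f j ∈ B then (1 : K) else 0 := by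
  have hcard : ((#(A ∩ B) : ℕ) : K) =
      ∑ a, (if a ∈ A then (1 : K) else 0) * if a ∈ B then 1 else 0 := by
    simp only [ite_mul, one_mul, zero_mul, ← ite_and, Finset.sum_boole]
    congr 2
    ext
    simp
  simp only [hcard, Fintype.sum_pow, Finset.prod_mul_distrib]

/-- Expanding `P` in monomials and `|A ∩ B| ^ k` over `k`-tuples writes `P(|A ∩ B|)` as a
bilinear form in vectors attached to `A` and `B` separately. -/
theorem sum_tuples_eq_eval [CommRing K] (P : K[X]) (hP : P.natDegree ≤ d)
    (A B : Finset (Fin m)) :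
    ∑ x : Σ k : Fin (d + 1), Fin k → Fin m,
      (P.coeff x.1 * ∏ j, if x.2 j ∈ A then (1 : K) else 0) *
        (∏ j, if x.2 j ∈ B then (1 : K) else 0) = P.eval (#(A ∩ B) : K) := by
  rw [Fintype.sum_sigma, eval_eq_sum_range' (Nat.lt_succ_of_le hP),
    ← Fin.sum_univ_eq_sum_range (fun k => P.coeff k * ((#(A ∩ B) : ℕ) : K) ^ k)]
  refine Finset.sum_congr rfl fun k _ => ?_
  simp only [mul_assoc, ← Finset.mul_sum, natCast_card_inter_pow]

/-- Frankl–Wilson, run layer by layer: vectors of different layers have disjoint supports. -/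
theorem fits_of_eval_card_inter [CommRing K] [Fintype ι] {G : SimpleGraph V}
    (layer : V → ι) (κ : V → Finset (Fin m)) (P : ι → K[X])
    (hdeg : ∀ i, (P i).natDegree ≤ d)
    (hdiag : ∀ v, (P (layer v)).eval (#(κ v) : K) ≠ 0)
    (hoff : ∀ v w, v ≠ w → ¬ G.Adj v w → layer v = layer w →
      (P (layer v)).eval (#(κ v ∩ κ w) : K) = 0) :
    Fits K G (ι × Σ k : Fin (d + 1), Fin k → Fin m) := by
  classical
  set p : V → ι × (Σ k : Fin (d + 1), Fin k → Fin m) → K := fun v ix =>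
    if layer v = ix.1 then (P ix.1).coeff ix.2.1 * ∏ j, if ix.2.2 j ∈ κ v then 1 else 0 else 0
  set q : V → ι × (Σ k : Fin (d + 1), Fin k → Fin m) → K := fun w ix =>
    if layer w = ix.1 then ∏ j, if ix.2.2 j ∈ κ w then 1 else 0 else 0
  have hpq : ∀ v w, p v ⬝ᵥ q w =
      if layer v = layer w then (P (layer v)).eval (#(κ v ∩ κ w) : K) else 0 := by
    intro v w
    rw [dotProduct, Fintype.sum_prod_type, Finset.sum_eq_single (layer v)]
    · split_ifs with h
      · rw [← sum_tuples_eq_eval _ (hdeg _)]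
        simp [p, q, h]
      · simp [p, q, Ne.symm h]
    · intro i _ hi
      simp [p, Ne.symm hi]
    · simp
  refine ⟨p, q, fun v => by simpa [hpq] using hdiag v, fun v w hne hnadj => ?_⟩
  rw [hpq]
  split_ifs with h
  · exact hoff v w hne hnadj h
  · rfl

end Intersection

theorem card_sigma_tuples_le (d m : ℕ) :
    Fintype.card (Σ k : Fin (d + 1), Fin k → Fin m) ≤ (m + 1) ^ d := by
  rw [Fintype.card_sigma, add_pow]
  simp only [Fintype.card_fun, Fintype.card_fin, one_pow, mul_one]
  rw [Fin.sum_univ_eq_sum_range (fun k => m ^ k)]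
  exact Finset.sum_le_sum fun k hk =>
    Nat.le_mul_of_pos_right _ (Nat.choose_pos (Nat.lt_succ_iff.1 (Finset.mem_range.1 hk)))

theorem mul_pow_lt_choose {c d s m : ℕ} (hc : 0 < c) (hds : d < s)
    (hm : c * 2 ^ s * s.factorial ≤ m) : c * (m + 1) ^ d < m.choose s := by
  have h2s : 2 * s ≤ m := by
    calc 2 * s ≤ 2 ^ s * s.factorial :=
          Nat.mul_le_mul (Nat.le_self_pow (by omega) 2) (Nat.self_le_factorial s)
      _ ≤ c * 2 ^ s * s.factorial := by rw [mul_assoc]; exact Nat.le_mul_of_pos_left _ hc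
      _ ≤ m := hm
  have hchoose : (m + 1) ^ s ≤ 2 ^ s * s.factorial * m.choose s := by
    calc (m + 1) ^ s ≤ (2 * (m + 1 - s)) ^ s := Nat.pow_le_pow_left (by omega) s
      _ = 2 ^ s * (m + 1 - s) ^ s := mul_pow _ _ _
      _ ≤ 2 ^ s * m.descFactorial s := Nat.mul_le_mul_left _ (Nat.pow_sub_le_descFactorial m s)
      _ = 2 ^ s * s.factorial * m.choose s := by
        rw [Nat.descFactorial_eq_factorial_mul_choose, mul_assoc]
  refine Nat.lt_of_mul_lt_mul_left (a := 2 ^ s * s.factorial) ?_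
  calc 2 ^ s * s.factorial * (c * (m + 1) ^ d)
        = c * 2 ^ s * s.factorial * (m + 1) ^ d := by ring
    _ < (m + 1) * (m + 1) ^ d :=
        Nat.mul_lt_mul_of_lt_of_le (by omega) le_rfl (by positivity)
    _ = (m + 1) ^ (d + 1) := (pow_succ' _ _).symm
    _ ≤ (m + 1) ^ s := Nat.pow_le_pow_right (by omega) hds
    _ ≤ 2 ^ s * s.factorial * m.choose s := hchoose

noncomputable def ofInduce {V : Type} [Finite V] (G : SimpleGraph V) (s : Set V) : FinGraph :=
  @FinGraph.mk s (Fintype.ofFinite s) (G.induce s)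

theorem cohomLE_ofInduce {V : Type} [Finite V] (G : SimpleGraph V) {s t : Set V} (h : s ⊆ t) :
    cohomLE (ofInduce G s) (ofInduce G t) :=
  cohomLE_of_embedding (SimpleGraph.induceHomOfLE G h)

def layeredGraph {ι : Type} (m : ℕ) (p : ι → ℕ) : SimpleGraph (ι × Finset (Fin m)) where
  Adj v w := v ≠ w ∧ v.1 = w.1 ∧ ¬ p v.1 ∣ #(v.2 ∩ w.2)
  symm := ⟨fun v w ⟨hne, hi, hp⟩ => ⟨hne.symm, hi.symm, by rwa [← hi, inter_comm]⟩⟩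
  loopless := ⟨fun _ h => h.1 rfl⟩

theorem card_inter_lt_of_ne {α : Type} [DecidableEq α] {A B : Finset α} {s : ℕ} (hAB : A ≠ B)
    (hA : #A = s) (hB : #B = s) : #(A ∩ B) < s := by
  refine lt_of_le_of_ne (hA ▸ card_le_card inter_subset_left) fun h => hAB ?_
  have hAsub : A ⊆ B := inter_eq_left.1 (eq_of_subset_of_card_le inter_subset_left (by omega))
  exact eq_of_subset_of_card_le hAsub (by omega)

section Construction

variable {M : Type} (m : ℕ) (p : M → ℕ)

noncomputable def layerGraph [Finite M] (x : M) : FinGraph :=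
  ofInduce (layeredGraph m p) {v | v.1 = x ∧ #v.2 = 2 * p x}

noncomputable def downGraph [Finite M] [Preorder M] (x : M) : FinGraph :=
  ofInduce (layeredGraph m p) {v | v.1 ≤ x ∧ #v.2 = 2 * p v.1}

variable {m p}

theorem choose_le_card_layerGraph [Finite M] (x : M) :
    m.choose (2 * p x) ≤ Fintype.card (layerGraph m p x).V := by
  calc m.choose (2 * p x) = Fintype.card {A : Finset (Fin m) // #A = 2 * p x} := by simp
    _ ≤ Fintype.card (layerGraph m p x).V :=
      Fintype.card_le_of_injective (fun A => ⟨(x, A.1), rfl, A.2⟩)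
        fun A B h => Subtype.ext (congrArg (fun v => v.1.2) h)

theorem fits_compl_layerGraph [Finite M] (x : M) [Fact (p x).Prime] :
    Fits (ZMod (p x)) (layerGraph m p x).Gᶜ
      (Unit × Σ k : Fin (p x - 1 + 1), Fin k → Fin m) := by
  have hp1 : p x - 1 ≠ 0 := by have := (Fact.out : (p x).Prime).two_le; omega
  refine fits_of_eval_card_inter (fun _ => ()) (fun v => v.1.2) (fun _ => X ^ (p x - 1) - 1)
    (fun _ => by compute_degree) (fun v => ?_) fun v w hne hnadj _ => ?_
  · simp [v.2.2, zero_pow hp1]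
  · obtain ⟨-, hlayer, hndvd⟩ : (layeredGraph m p).Adj v.1 w.1 := by
      by_contra h
      exact hnadj ⟨hne, h⟩
    rw [v.2.1] at hndvd
    have hne0 : ((#(v.1.2 ∩ w.1.2) : ℕ) : ZMod (p x)) ≠ 0 := by
      rwa [Ne, ZMod.natCast_eq_zero_iff]
    simp [ZMod.pow_card_sub_one_eq_one hne0]

theorem layerGraph_cohomLE_downGraph [Finite M] [Preorder M] (x : M) :
    cohomLE (layerGraph m p x) (downGraph m p x) :=
  cohomLE_ofInduce _ fun _ ⟨hx, hcard⟩ => ⟨hx.le, hx ▸ hcard⟩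

theorem downGraph_cohomLE [Finite M] [Preorder M] {x y : M} (h : x ≤ y) :
    cohomLE (downGraph m p x) (downGraph m p y) :=
  cohomLE_ofInduce _ fun _ hv => ⟨hv.1.trans h, hv.2⟩

theorem fits_downGraph {K : Type} [Field K] [Fintype M] [Preorder M] (y : M) (h2 : (2 : K) ≠ 0)
    (hp : ∀ z ≤ y, (p z : K) ≠ 0) :
    Fits K (downGraph m p y).G (M × Σ k : Fin (2 + 1), Fin k → Fin m) := by
  refine fits_of_eval_card_inter (fun v => v.1.1) (fun v => v.1.2)
    (fun z => X * (X - C (p z : K))) (fun _ => by compute_degree) (fun v => ?_)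
    fun v w hne hnadj hlayer => ?_
  · obtain ⟨hz, hcard⟩ := v.2
    simp only [hcard, eval_mul, eval_X, eval_sub, eval_C]
    push_cast
    rw [show 2 * (p v.1.1 : K) - p v.1.1 = p v.1.1 by ring]
    exact mul_ne_zero (mul_ne_zero h2 (hp _ hz)) (hp _ hz)
  · have hv := v.2.2
    have hw := w.2.2
    simp only [hlayer] at hv ⊢
    have hdvd : p w.1.1 ∣ #(v.1.2 ∩ w.1.2) := by
      by_contra h
      exact hnadj ⟨fun h' => hne (Subtype.ext h'), hlayer, hlayer ▸ h⟩
    have hlt := card_inter_lt_of_ne (fun h => hne (Subtype.ext (Prod.ext hlayer h))) hv hw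
    obtain ⟨c, hc⟩ := hdvd
    have hc2 : c < 2 := by
      by_contra! h
      nlinarith
    interval_cases c <;> simp [hc]

theorem not_asympCohomLE_downGraph [Fintype M] [Preorder M] (hp : Function.Injective p)
    (hprime : ∀ z, (p z).Prime ∧ p z ≠ 2) {x y : M}
    (hm : Fintype.card M * 2 ^ (2 * p x) * (2 * p x).factorial ≤ m) (hxy : ¬ x ≤ y) :
    ¬ asympCohomLE (downGraph m p x) (downGraph m p y) := by
  intro h
  have hpx := (hprime x).1
  have := Fact.mk hpx
  have h2 : (2 : ZMod (p x)) ≠ 0 := by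
    have : ¬ p x ∣ 2 := fun hd =>
      (hprime x).2 ((Nat.prime_dvd_prime_iff_eq hpx Nat.prime_two).1 hd)
    exact_mod_cast (ZMod.natCast_eq_zero_iff 2 (p x)).not.2 this
  have hpz : ∀ z ≤ y, (p z : ZMod (p x)) ≠ 0 := by
    intro z hz hzero
    rw [ZMod.natCast_eq_zero_iff, Nat.prime_dvd_prime_iff_eq hpx (hprime z).1] at hzero
    exact hxy (hp hzero ▸ hz)
  have hcard := card_le_of_asympCohomLE ((layerGraph_cohomLE_downGraph x).trans_asympCohomLE h)
    (fits_downGraph y h2 hpz) (fits_compl_layerGraph x)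
  have hI : Fintype.card (M × Σ k : Fin (2 + 1), Fin k → Fin m) ≤
      Fintype.card M * (m + 1) ^ 2 := by
    rw [Fintype.card_prod]
    exact Nat.mul_le_mul_left _ (card_sigma_tuples_le 2 m)
  have hJ : Fintype.card (Unit × Σ k : Fin (p x - 1 + 1), Fin k → Fin m) ≤
      (m + 1) ^ (p x - 1) := by
    rw [Fintype.card_prod, Fintype.card_unit, one_mul]
    exact card_sigma_tuples_le _ m
  have hlt := mul_pow_lt_choose (d := p x + 1) (Fintype.card_pos_iff.2 ⟨x⟩)
    (by have := hpx.two_le; omega) hm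
  have hexp : (m + 1) ^ 2 * (m + 1) ^ (p x - 1) = (m + 1) ^ (p x + 1) := by
    rw [← pow_add]
    congr 1
    have := hpx.two_le
    omega
  have := (choose_le_card_layerGraph x).trans (hcard.trans (Nat.mul_le_mul hI hJ))
  rw [mul_assoc, hexp] at this
  omega

end Construction

theorem exists_injective_odd_primes (M : Type) [Countable M] :
    ∃ p : M → ℕ, Function.Injective p ∧ ∀ z, (p z).Prime ∧ p z ≠ 2 := by
  obtain ⟨e, he⟩ := Countable.exists_injective_nat M
  have hnth := Nat.nth_injective Nat.infinite_setOfPred_prime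
  refine ⟨fun z => Nat.nth Nat.Prime (e z + 1), fun a b h => he (Nat.succ_injective (hnth h)),
    fun z => ⟨Nat.prime_nth_prime _, fun h => ?_⟩⟩
  have := hnth (h.trans Nat.nth_prime_zero_eq_two.symm)
  omega

end FinGraph

/-- Every finite preorder order-embeds into the asymptotic cohomomorphism preorder. -/
theorem finite_preorder_embeds_asympCohom (M : Type) [Fintype M] [Preorder M] :
    ∃ F : M → FinGraph, ∀ x y : M, x ≤ y ↔ asympCohomLE (F x) (F y) := by
  obtain ⟨p, hp, hprime⟩ := exists_injective_odd_primes M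
  let m := ∑ z, Fintype.card M * 2 ^ (2 * p z) * (2 * p z).factorial
  refine ⟨downGraph m p, fun x y => ⟨fun h => asympCohomLE_of_cohomLE (downGraph_cohomLE h),
    fun h => ?_⟩⟩
  by_contra hxy
  have hm : Fintype.card M * 2 ^ (2 * p x) * (2 * p x).factorial ≤ m :=
    Finset.single_le_sum (f := fun z => Fintype.card M * 2 ^ (2 * p z) * (2 * p z).factorial)
      (fun _ _ => Nat.zero_le _) (Finset.mem_univ x)
  exact not_asympCohomLE_downGraph hp hprime hm hxy h
end

section
/- Let 1 ≤ s < t be real numbers. One can assign to each finite binary string w ∈ W = {0,1}* a pair of rational numbers (a_w, b_w) with a_w > 2 and b_w > 2, and a real number r_w ∈ (s, t), such that: (i) for every v, w ∈ W, if v ≤_W w and v ≠ w, then a_v < a_w and b_v < b_w; and (ii) for every v, w ∈ W, if v ≰_W w, then a_v·r_v + b_v > a_w·r_v + b_w. -/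
open Filter

open FinGraph

/-!
The lines are built top-down along the binary tree. A node carries its line, an interval
`[l, u] ⊆ [0, T]` holding the witnesses of all its descendants, and a slack `e > 0`. Both children
lower the line by a multiple of `δ = e / (2 (T + 1))`, but by amounts that cross at the midpoint of
`[l, u]`: on the left quarter the `false`-child ends up higher than the `true`-child by `δ q / 2`,
on the right quarter the other way round (`q` is the length of a quarter). The children receive
these quarters as intervals and the slack `δ q / 4`. On `[0, T]` every descendant's line stays
within the slack of each ancestor's line, so at the witness of `v` (the midpoint of its interval)
the line of `v` is above every line that branches off the path to `v`, while the lines of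
extensions of `v` lie below it on all of `[0, ∞)`.
-/

namespace LineEncoding

structure Node where
  a : ℚ
  b : ℚ
  l : ℚ
  u : ℚ
  e : ℚ

namespace Node

def eval (σ : Node) (x : ℚ) : ℚ := σ.a * x + σ.b

def mid (σ : Node) : ℚ := (σ.l + σ.u) / 2

def quarter (σ : Node) : ℚ := (σ.u - σ.l) / 4

def step (σ : Node) (T : ℚ) : ℚ := σ.e / (2 * (T + 1))

structure Good (T : ℚ) (σ : Node) : Prop where
  nonneg_l : 0 ≤ σ.l
  l_lt_u : σ.l < σ.u
  u_le : σ.u ≤ T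
  e_pos : 0 < σ.e

theorem eval_le_eval {σ τ : Node} (ha : τ.a ≤ σ.a) (hb : τ.b ≤ σ.b) {x : ℚ} (hx : 0 ≤ x) :
    τ.eval x ≤ σ.eval x := by
  unfold eval; nlinarith

theorem eval_lt_eval {σ τ : Node} (ha : τ.a ≤ σ.a) (hb : τ.b < σ.b) {x : ℚ} (hx : 0 ≤ x) :
    τ.eval x < σ.eval x := by
  unfold eval; nlinarith

variable {T : ℚ} {σ : Node}

namespace Good

theorem l_lt_mid (h : σ.Good T) : σ.l < σ.mid := by unfold mid; linarith [h.l_lt_u]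

theorem mid_lt_u (h : σ.Good T) : σ.mid < σ.u := by unfold mid; linarith [h.l_lt_u]

theorem quarter_pos (h : σ.Good T) : 0 < σ.quarter := by unfold quarter; linarith [h.l_lt_u]

theorem l_add_quarter_lt_u (h : σ.Good T) : σ.l + σ.quarter < σ.u := by
  unfold quarter; linarith [h.l_lt_u]

theorem quarter_le (h : σ.Good T) : σ.quarter ≤ T := by
  unfold quarter; linarith [h.nonneg_l, h.l_lt_u, h.u_le]

theorem step_pos (h : σ.Good T) : 0 < σ.step T :=
  div_pos h.e_pos (by linarith [h.nonneg_l, h.l_lt_u, h.u_le])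

theorem step_mul (h : σ.Good T) : σ.step T * (2 * (T + 1)) = σ.e :=
  div_mul_cancel₀ _ (by linarith [h.nonneg_l, h.l_lt_u, h.u_le])

end Good

variable (T) in
def child (σ : Node) : Bool → Node
  | false => ⟨σ.a - σ.step T, σ.b - σ.step T, σ.l, σ.l + σ.quarter, σ.step T * σ.quarter / 4⟩
  | true => ⟨σ.a - σ.step T / 2, σ.b - σ.step T * (1 + σ.mid / 2), σ.u - σ.quarter, σ.u,
      σ.step T * σ.quarter / 4⟩

theorem Good.child (h : σ.Good T) (c : Bool) : (σ.child T c).Good T := by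
  have := h.quarter_pos
  have := h.step_pos
  have := h.l_add_quarter_lt_u
  have := h.nonneg_l
  have := h.u_le
  cases c <;> constructor <;> simp only [Node.child] <;> first | positivity | linarith

theorem child_a_lt (h : σ.Good T) (c : Bool) : (σ.child T c).a < σ.a := by
  have := h.step_pos
  cases c <;> simp only [child] <;> linarith

theorem child_b_lt (h : σ.Good T) (c : Bool) : (σ.child T c).b < σ.b := by
  have := h.step_pos
  have : 0 < σ.mid := by linarith [h.l_lt_mid, h.nonneg_l]
  cases c <;> simp only [child] <;> nlinarith

theorem l_le_child_l (h : σ.Good T) (c : Bool) : σ.l ≤ (σ.child T c).l := by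
  have := h.l_add_quarter_lt_u
  cases c <;> simp only [child] <;> linarith

theorem child_u_le_u (h : σ.Good T) (c : Bool) : (σ.child T c).u ≤ σ.u := by
  have := h.l_add_quarter_lt_u
  cases c <;> simp only [child] <;> linarith

/-- On `[0, T]` the drop to a child is at most `δ (T + 1)` and its slack at most `δ T`, while
`e = 2 δ (T + 1)`. -/
theorem child_drop_add_e_le (h : σ.Good T) (c : Bool) {x : ℚ} (hx₀ : 0 ≤ x) (hxT : x ≤ T) :
    σ.eval x - (σ.child T c).eval x + (σ.child T c).e ≤ σ.e := by
  have hδ := h.step_pos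
  have hq := h.quarter_le
  have hm : σ.mid ≤ T := by linarith [h.mid_lt_u, h.u_le]
  have hδq : σ.step T * σ.quarter ≤ σ.step T * T := mul_le_mul_of_nonneg_left hq hδ.le
  have hδx : σ.step T * x ≤ σ.step T * T := mul_le_mul_of_nonneg_left hxT hδ.le
  have hδm : σ.step T * σ.mid ≤ σ.step T * T := mul_le_mul_of_nonneg_left hm hδ.le
  have := h.step_mul
  cases c <;> simp only [child, eval] <;> nlinarith

/-- The two children's drops differ by `δ (mid - x) / 2`, and `|mid - x| ≥ q` on the interval of
either child. -/
theorem child_eval_add_two_e_le {c c' : Bool} (hc : c ≠ c') (h : σ.Good T) {x : ℚ}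
    (hxl : (σ.child T c).l ≤ x) (hxu : x ≤ (σ.child T c).u) :
    (σ.child T c').eval x + 2 * (σ.child T c).e ≤ (σ.child T c).eval x := by
  have hδ := h.step_pos
  have hmid : σ.mid = σ.l + 2 * σ.quarter := by unfold mid quarter; ring
  have hmid' : σ.mid = σ.u - 2 * σ.quarter := by unfold mid quarter; ring
  cases c <;> cases c' <;> simp only [ne_eq, not_true_eq_false] at hc <;>
    simp only [child, eval] at hxl hxu ⊢
  · nlinarith [mul_le_mul_of_nonneg_left (show x + σ.quarter ≤ σ.mid by linarith) hδ.le]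
  · nlinarith [mul_le_mul_of_nonneg_left (show σ.mid + σ.quarter ≤ x by linarith) hδ.le]

variable (T) in
def descend (σ : Node) (w : List Bool) : Node := w.foldl (child T) σ

theorem descend_cons (c : Bool) (w : List Bool) :
    σ.descend T (c :: w) = (σ.child T c).descend T w := rfl

theorem descend_append (v w : List Bool) :
    σ.descend T (v ++ w) = (σ.descend T v).descend T w := List.foldl_append ..

theorem Good.descend (h : σ.Good T) (w : List Bool) : (σ.descend T w).Good T := by
  induction w generalizing σ with
  | nil => exact h
  | cons c w ih => exact ih (h.child c)

theorem descend_a_le (h : σ.Good T) (w : List Bool) : (σ.descend T w).a ≤ σ.a := by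
  induction w generalizing σ with
  | nil => exact le_rfl
  | cons c w ih => exact (ih (h.child c)).trans (child_a_lt h c).le

theorem descend_b_le (h : σ.Good T) (w : List Bool) : (σ.descend T w).b ≤ σ.b := by
  induction w generalizing σ with
  | nil => exact le_rfl
  | cons c w ih => exact (ih (h.child c)).trans (child_b_lt h c).le

theorem descend_a_lt (h : σ.Good T) {w : List Bool} (hw : w ≠ []) : (σ.descend T w).a < σ.a := by
  obtain ⟨c, w, rfl⟩ := List.exists_cons_of_ne_nil hw
  exact (descend_a_le (h.child c) w).trans_lt (child_a_lt h c)

theorem descend_b_lt (h : σ.Good T) {w : List Bool} (hw : w ≠ []) : (σ.descend T w).b < σ.b := by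
  obtain ⟨c, w, rfl⟩ := List.exists_cons_of_ne_nil hw
  exact (descend_b_le (h.child c) w).trans_lt (child_b_lt h c)

theorem l_le_descend_l (h : σ.Good T) (w : List Bool) : σ.l ≤ (σ.descend T w).l := by
  induction w generalizing σ with
  | nil => exact le_rfl
  | cons c w ih => exact (l_le_child_l h c).trans (ih (h.child c))

theorem descend_u_le_u (h : σ.Good T) (w : List Bool) : (σ.descend T w).u ≤ σ.u := by
  induction w generalizing σ with
  | nil => exact le_rfl
  | cons c w ih => exact (ih (h.child c)).trans (child_u_le_u h c)

theorem descend_drop_add_e_le (h : σ.Good T) (w : List Bool) {x : ℚ} (hx₀ : 0 ≤ x)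
    (hxT : x ≤ T) : σ.eval x - (σ.descend T w).eval x + (σ.descend T w).e ≤ σ.e := by
  induction w generalizing σ with
  | nil => simp [descend]
  | cons c w ih =>
    have := ih (h.child c)
    have := child_drop_add_e_le h c hx₀ hxT
    rw [descend_cons]
    linarith

theorem sub_e_lt_descend_a_and_b (h : σ.Good T) (hT : 1 ≤ T) (w : List Bool) :
    σ.a - σ.e < (σ.descend T w).a ∧ σ.b - σ.e < (σ.descend T w).b := by
  have hdrop := descend_drop_add_e_le h w zero_le_one hT
  have := descend_a_le h w
  have := descend_b_le h w
  have := (h.descend w).e_pos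
  simp only [eval, mul_one] at hdrop
  constructor <;> linarith

theorem descend_eval_lt_of_ne {c c' : Bool} (hc : c ≠ c') (h : σ.Good T) (v w : List Bool)
    {x : ℚ} (hxl : ((σ.child T c).descend T v).l ≤ x) (hxu : x ≤ ((σ.child T c).descend T v).u) :
    ((σ.child T c').descend T w).eval x < ((σ.child T c).descend T v).eval x := by
  have hc' := h.child c
  have hxl' := (l_le_descend_l hc' v).trans hxl
  have hxu' := hxu.trans (descend_u_le_u hc' v)
  have hx₀ : 0 ≤ x := hc'.nonneg_l.trans hxl'
  have hxT : x ≤ T := hxu'.trans hc'.u_le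
  have hbelow := eval_le_eval (descend_a_le (h.child c') w) (descend_b_le (h.child c') w) hx₀
  have hsep := child_eval_add_two_e_le hc h hxl' hxu'
  have hdrop := descend_drop_add_e_le hc' v hx₀ hxT
  have := hc'.e_pos
  have := (hc'.descend v).e_pos
  linarith

theorem descend_eval_mid_lt_of_not_prefix (h : σ.Good T) {v w : List Bool} (hwv : ¬ w <+: v) :
    (σ.descend T w).eval (σ.descend T v).mid < (σ.descend T v).eval (σ.descend T v).mid := by
  induction v generalizing σ w with
  | nil =>
    have hw : w ≠ [] := by rintro rfl; exact hwv List.nil_prefix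
    exact eval_lt_eval (descend_a_le h w) (descend_b_lt h hw)
      (h.nonneg_l.trans h.l_lt_mid.le)
  | cons c v ih =>
    obtain _ | ⟨c', w⟩ := w
    · exact absurd List.nil_prefix hwv
    rw [descend_cons, descend_cons]
    by_cases hc : c = c'
    · subst hc
      exact ih (h.child c) (fun hp => hwv (List.cons_prefix_cons.mpr ⟨rfl, hp⟩))
    · have hv := (h.child c).descend v
      exact descend_eval_lt_of_ne hc h v w hv.l_lt_mid.le hv.mid_lt_u.le

theorem descend_lt_of_prefix (h : σ.Good T) {v w : List Bool} (hwv : w <+: v) (hne : v ≠ w) :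
    (σ.descend T v).a < (σ.descend T w).a ∧ (σ.descend T v).b < (σ.descend T w).b := by
  obtain ⟨u, rfl⟩ := hwv
  have hu : u ≠ [] := by rintro rfl; exact hne (List.append_nil w)
  rw [descend_append]
  exact ⟨descend_a_lt (h.descend w) hu, descend_b_lt (h.descend w) hu⟩

end Node

end LineEncoding

open LineEncoding

/-- Encoding binary words by lines: for `1 ≤ s < t` one can assign to each binary string
`w` rationals `a w, b w > 2` and a witness value `r w ∈ (s, t)` such that (i) if `w` is a
proper prefix of `v` then `a v < a w` and `b v < b w`, and (ii) if `w` is not a prefix of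
`v` then the line of `v` lies strictly above the line of `w` at the witness value `r v`. -/
theorem exists_lines_encoding_binary_strings (s t : ℝ) (hs : 1 ≤ s) (hst : s < t) :
    ∃ (a b : List Bool → ℚ) (r : List Bool → ℝ),
      (∀ w, 2 < a w ∧ 2 < b w) ∧
      (∀ w, s < r w ∧ r w < t) ∧
      (∀ v w : List Bool, w <+: v → v ≠ w → a v < a w ∧ b v < b w) ∧
      (∀ v w : List Bool, ¬ w <+: v →
        (a w : ℝ) * r v + (b w : ℝ) < (a v : ℝ) * r v + (b v : ℝ)) := by
  obtain ⟨S, hsS, hSt⟩ := exists_rat_btwn hst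
  obtain ⟨T, hST, hTt⟩ := exists_rat_btwn hSt
  have hS₁ : (1 : ℚ) ≤ S := by exact_mod_cast hs.trans hsS.le
  have hST' : S < T := by exact_mod_cast hST
  let root : Node := ⟨3, 3, S, T, 1 / 2⟩
  have hroot : root.Good T := ⟨by linarith, hST', le_rfl, by norm_num⟩
  refine ⟨fun w => (root.descend T w).a, fun w => (root.descend T w).b,
    fun w => (root.descend T w).mid, fun w => ?_, fun w => ?_,
    fun v w hwv hne => Node.descend_lt_of_prefix hroot hwv hne, fun v w hwv => ?_⟩
  · have := Node.sub_e_lt_descend_a_and_b hroot (by linarith) w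
    norm_num [root] at this
    constructor <;> linarith
  · dsimp only
    have hw := hroot.descend w
    have hl : S ≤ (root.descend T w).mid := (Node.l_le_descend_l hroot w).trans hw.l_lt_mid.le
    have hu : (root.descend T w).mid ≤ T := hw.mid_lt_u.le.trans (Node.descend_u_le_u hroot w)
    exact ⟨hsS.trans_le (by exact_mod_cast hl), lt_of_le_of_lt (by exact_mod_cast hu) hTt⟩
  · have := Node.descend_eval_mid_lt_of_not_prefix hroot hwv
    simp only [Node.eval] at this
    dsimp only
    exact_mod_cast this
end

section
/- Let p, q ∈ ℕ with 2 ≤ q ≤ p/2 − 1. If ξ̄_f(E_{p/(q−1)}) = p/(q−1) and ξ̄_f(E_{p/(q+1)}) = p/(q+1), then ξ̄_f(E_{p/q}) = p/q. -/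
open Filter

open FinGraph

/-!
Let `W` assign `r`-dimensional subspaces of `ℂ^d` to the vertices of `E_{p/q}`, orthogonally
on non-edges. Shifting an index by one changes cyclic distances by at most one, so the
intersections `W i ⊓ W (i+1)` represent `E_{p/(q-1)}` and the sums `W i ⊔ W (i+1)` represent
`E_{p/(q+1)}`, now with subspaces of varying dimension. The direct sum of the `p` rotations of
such a representation has constant dimension, so the hypotheses bound the two total dimensions
by `(q-1)d` and `(q+1)d`. As `dim (A ⊓ B) + dim (A ⊔ B) = 2r`, adding gives `2pr ≤ 2qd`, i.e.
`p/q ≤ d/r`. The value `p/q` itself is attained by the coordinate intervals `{i, …, i+q-1}`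
in `ℂ^p`.
-/

open Module

theorem sum_finrank_inf_add_sum_finrank_sup {K V ι : Type*} [DivisionRing K] [AddCommGroup V]
    [Module K V] [FiniteDimensional K V] [Fintype ι] (W : ι → Submodule K V) (f : ι → ι)
    {r : ℕ} (hW : ∀ i, finrank K (W i) = r) :
    ∑ i, finrank K ↥(W i ⊓ W (f i)) + ∑ i, finrank K ↥(W i ⊔ W (f i)) =
      Fintype.card ι * (2 * r) := by
  simp_rw [← Finset.sum_add_distrib, add_comm (finrank K ↥(W _ ⊓ _)),
    Submodule.finrank_sup_add_finrank_inf_eq, hW]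
  simp [two_mul]

section BlockSum

variable {E : Type*} [NormedAddCommGroup E] [InnerProductSpace ℂ E] {ι : Type*} [Fintype ι]

/-- `⨁ k, V k`, as a subspace of the `ℓ²` direct sum of copies of `E`. -/
noncomputable def blockSum (V : ι → Submodule ℂ E) : Submodule ℂ (PiLp 2 fun _ : ι => E) :=
  LinearMap.range ((WithLp.linearEquiv 2 ℂ (ι → E)).symm.toLinearMap ∘ₗ
    LinearMap.piMap fun k => (V k).subtype)

theorem finrank_blockSum [FiniteDimensional ℂ E] (V : ι → Submodule ℂ E) :
    finrank ℂ (blockSum V) = ∑ k, finrank ℂ (V k) := by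
  rw [blockSum, LinearMap.finrank_range_of_inj, finrank_pi_fintype]
  intro u w huw
  funext k
  exact Subtype.ext (congrFun (congrArg WithLp.ofLp huw) k)

theorem finrank_piLp [FiniteDimensional ℂ E] :
    finrank ℂ (PiLp 2 fun _ : ι => E) = Fintype.card ι * finrank ℂ E := by
  rw [(WithLp.linearEquiv 2 ℂ (ι → E)).finrank_eq, finrank_pi_fintype, Finset.sum_const,
    Finset.card_univ, smul_eq_mul]

theorem blockSum_isOrtho {V V' : ι → Submodule ℂ E} (h : ∀ k, V k ⟂ V' k) :
    blockSum V ⟂ blockSum V' := by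
  rw [Submodule.isOrtho_iff_inner_eq]
  rintro _ ⟨u, rfl⟩ _ ⟨w, rfl⟩
  rw [PiLp.inner_apply]
  exact Finset.sum_eq_zero fun k _ => (h k).inner_eq (u k).2 (w k).2

end BlockSum

namespace FinGraph

section OrthRep

variable {E : Type*} [NormedAddCommGroup E] [InnerProductSpace ℂ E]

def IsOrthRep (A : FinGraph) (W : A.V → Submodule ℂ E) : Prop :=
  ∀ v w, v ≠ w → ¬ A.G.Adj v w → W v ⟂ W w

def feasibleRatios (A : FinGraph) : Set ℝ :=
  { x | ∃ d r : ℕ, 0 < d ∧ 0 < r ∧ x = d / r ∧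
    ∃ W : A.V → Submodule ℂ (EuclideanSpace ℂ (Fin d)),
      (∀ v, finrank ℂ (W v) = r) ∧ IsOrthRep A W }

theorem xibar_eq_sInf (A : FinGraph) : xibar A = sInf (feasibleRatios A) := by
  simp only [xibar, feasibleRatios, IsOrthRep, Submodule.isOrtho_iff_inner_eq]

theorem feasibleRatios_nonneg {A : FinGraph} {x : ℝ} (hx : x ∈ feasibleRatios A) : 0 ≤ x := by
  obtain ⟨d, r, -, -, rfl, -⟩ := hx
  positivity

theorem xibar_le {A : FinGraph} {x : ℝ} (hx : x ∈ feasibleRatios A) : xibar A ≤ x :=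
  xibar_eq_sInf A ▸ csInf_le ⟨0, fun _ => feasibleRatios_nonneg⟩ hx

theorem finrank_div_mem_feasibleRatios [FiniteDimensional ℂ E] {A : FinGraph} [Nonempty A.V]
    {W : A.V → Submodule ℂ E} (hW : IsOrthRep A W) {r : ℕ} (hr : 0 < r)
    (hdim : ∀ v, finrank ℂ (W v) = r) : (finrank ℂ E : ℝ) / r ∈ feasibleRatios A := by
  let e := (stdOrthonormalBasis ℂ E).repr
  obtain ⟨v⟩ := ‹Nonempty A.V›
  refine ⟨finrank ℂ E, r, hr.trans_le ((hdim v).symm.trans_le (W v).finrank_le), hr, rfl,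
    fun v => (W v).map (e.toLinearEquiv : E →ₗ[ℂ] _), fun v => ?_, fun v w hvw hadj => ?_⟩
  · rw [LinearEquiv.finrank_map_eq, hdim]
  · exact (hW v w hvw hadj).map e.toLinearIsometry

theorem card_div_mem_feasibleRatios {A : FinGraph} [Nonempty A.V] {κ : Type} [Fintype κ]
    {S : A.V → Finset κ} {r : ℕ} (hr : 0 < r) (hS : ∀ v, (S v).card = r)
    (hdisj : ∀ v w, v ≠ w → ¬ A.G.Adj v w → Disjoint (S v) (S w)) :
    (Fintype.card κ : ℝ) / r ∈ feasibleRatios A := by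
  let b := EuclideanSpace.basisFun κ ℂ
  have hrep : IsOrthRep A fun v => Submodule.span ℂ (Set.range fun j : S v => b j) := by
    intro v w hvw hadj
    rw [Submodule.isOrtho_span]
    rintro _ ⟨j, rfl⟩ _ ⟨l, rfl⟩
    exact b.orthonormal.inner_eq_zero fun hjl =>
      Finset.disjoint_left.1 (hdisj v w hvw hadj) j.2 (hjl ▸ l.2)
  have := finrank_div_mem_feasibleRatios hrep hr fun v =>
    (finrank_span_eq_card (b.orthonormal.linearIndependent.comp _ Subtype.val_injective)).trans
      ((Fintype.card_coe _).trans (hS v))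
  rwa [finrank_euclideanSpace] at this

/-- The blocks `v ↦ ⨁ k, V (σ k v)` form a representation all of whose subspaces have dimension
`∑ v, dim V v`, because each `k ↦ σ k v` is a bijection. -/
theorem xibar_mul_sum_finrank_le [FiniteDimensional ℂ E] {A : FinGraph} {ι : Type*} [Fintype ι]
    (σ : ι → A.G ≃g A.G) (hσ : ∀ v, Function.Bijective fun k => σ k v)
    {V : A.V → Submodule ℂ E} (hV : IsOrthRep A V) :
    xibar A * ∑ v, finrank ℂ (V v) ≤ Fintype.card ι * finrank ℂ E := by
  rcases Nat.eq_zero_or_pos (∑ v, finrank ℂ (V v)) with hS | hS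
  · rw [hS, Nat.cast_zero, mul_zero]
    positivity
  have : Nonempty A.V := by
    by_contra h
    simp [not_nonempty_iff.1 h] at hS
  have hrep : IsOrthRep A fun v => blockSum fun k => V (σ k v) := fun v w hvw hadj =>
    blockSum_isOrtho fun k =>
      hV _ _ ((σ k).injective.ne hvw) (by rwa [SimpleGraph.Iso.map_adj_iff])
  have hdim (v : A.V) : finrank ℂ (blockSum fun k => V (σ k v)) = ∑ u, finrank ℂ (V u) := by
    rw [finrank_blockSum]
    exact Fintype.sum_bijective _ (hσ v) _ _ fun _ => rfl
  have := xibar_le (finrank_div_mem_feasibleRatios hrep hS hdim)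
  rw [finrank_piLp, le_div_iff₀ (by exact_mod_cast hS)] at this
  exact_mod_cast this

end OrthRep

section CycDist

theorem cycDist_eq_min_val_sub {p : ℕ} (i j : Fin p) :
    cycDist p i j = min (i - j).val (j - i).val := by
  simp only [cycDist, Fin.val_sub]
  congr 2 <;> omega

theorem cycDist_comm {p : ℕ} (i j : Fin p) : cycDist p i j = cycDist p j i := by
  rw [cycDist_eq_min_val_sub, cycDist_eq_min_val_sub, min_comm]

theorem cycDist_self (p i : ℕ) : cycDist p i i = 0 := by
  simp [cycDist]

variable {p q : ℕ} [NeZero p] {i j : Fin p}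

theorem cycDist_add_right (i j k : Fin p) :
    cycDist p (i + k : Fin p) (j + k : Fin p) = cycDist p i j := by
  simp only [cycDist_eq_min_val_sub, add_sub_add_right_eq_sub]

theorem le_cycDist_shift_of_sub_one_le (hqp : 2 * q ≤ p) (h : q - 1 ≤ cycDist p i j) :
    q ≤ cycDist p i (j + 1 : Fin p) ∨ q ≤ cycDist p (i + 1 : Fin p) j ∨
      q ≤ cycDist p i j := by
  obtain ⟨n, rfl⟩ := Nat.exists_eq_add_one_of_ne_zero (NeZero.ne p)
  simp only [cycDist_eq_min_val_sub] at h ⊢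
  rw [show i - (j + 1) = -(j - i + 1) by abel, show j + 1 - i = j - i + 1 by abel,
    show i + 1 - j = -(j - i - 1) by abel, show j - (i + 1) = j - i - 1 by abel,
    show i - j = -(j - i) by abel] at *
  generalize j - i = t at *
  simp only [Fin.val_neg, Fin.val_add_one, Fin.coe_sub_one, Fin.ext_iff, Fin.val_zero,
    Fin.val_last] at *
  split_ifs at * <;> omega

theorem le_cycDist_add_one_right (h : q + 1 ≤ cycDist p i j) :
    q ≤ cycDist p i (j + 1 : Fin p) := by
  obtain ⟨n, rfl⟩ := Nat.exists_eq_add_one_of_ne_zero (NeZero.ne p)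
  simp only [cycDist_eq_min_val_sub] at h ⊢
  rw [show i - (j + 1) = -(j - i + 1) by abel, show j + 1 - i = j - i + 1 by abel,
    show i - j = -(j - i) by abel] at *
  generalize j - i = t at *
  simp only [Fin.val_neg, Fin.val_add_one, Fin.ext_iff, Fin.val_zero, Fin.val_last] at *
  split_ifs at * <;> omega

theorem le_cycDist_add_one_left (h : q + 1 ≤ cycDist p i j) :
    q ≤ cycDist p (i + 1 : Fin p) j := by
  rw [cycDist_comm] at h ⊢
  exact le_cycDist_add_one_right h

theorem cycDist_lt_of_add_eq_add {a b : Fin p} (ha : a.val < q) (hb : b.val < q)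
    (h : i + a = j + b) : cycDist p i j < q := by
  rw [cycDist_eq_min_val_sub, show i - j = b - a by rw [sub_eq_sub_iff_add_eq_add, h, add_comm],
    show j - i = a - b by rw [sub_eq_sub_iff_add_eq_add, ← h, add_comm]]
  rcases le_total a b with hab | hab
  · exact (min_le_left _ _).trans_lt (by rw [Fin.coe_sub_iff_le.2 hab]; omega)
  · exact (min_le_right _ _).trans_lt (by rw [Fin.coe_sub_iff_le.2 hab]; omega)

end CycDist

def fracGraphRotate (p Q : ℕ) [NeZero p] (k : Fin p) :
    (fracGraph p Q).G ≃g (fracGraph p Q).G where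
  toEquiv := (Equiv.addRight k : Fin p ≃ Fin p)
  map_rel_iff' := by
    intro (i : Fin p) (j : Fin p)
    show i + k ≠ j + k ∧ cycDist p (i + k : Fin p) (j + k : Fin p) < Q ↔
      i ≠ j ∧ cycDist p i j < Q
    simp only [ne_eq, add_left_inj, cycDist_add_right]

section FracGraph

variable {E : Type*} [NormedAddCommGroup E] [InnerProductSpace ℂ E] {p Q : ℕ}

theorem isOrthRep_fracGraph_iff (hQ : 0 < Q) {W : Fin p → Submodule ℂ E} :
    IsOrthRep (fracGraph p Q) W ↔ ∀ i j : Fin p, Q ≤ cycDist p i j → W i ⟂ W j := by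
  constructor
  · refine fun hW i j hij => hW i j ?_ fun hadj => absurd hadj.2 (by omega)
    rintro rfl
    rw [cycDist_self] at hij
    omega
  · exact fun hW i j hne hadj => hW i j (not_lt.1 fun hlt => hadj ⟨hne, hlt⟩)

theorem sum_finrank_le_of_xibar_fracGraph_eq [FiniteDimensional ℂ E] [NeZero p] {c : ℝ}
    (hc : 0 < c) (hξ : xibar (fracGraph p Q) = p / c) {V : Fin p → Submodule ℂ E}
    (hV : IsOrthRep (fracGraph p Q) V) :
    ((∑ i, finrank ℂ (V i) : ℕ) : ℝ) ≤ c * finrank ℂ E := by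
  have := xibar_mul_sum_finrank_le (fracGraphRotate p Q)
    (fun i : Fin p => (Equiv.addLeft i).bijective) hV
  rw [Fintype.card_fin, hξ, div_mul_eq_mul_div, div_le_iff₀ hc, mul_right_comm] at this
  exact le_of_mul_le_mul_left (this.trans_eq (by ring)) (by exact_mod_cast NeZero.pos p)

theorem div_mem_feasibleRatios_fracGraph (hQ : 0 < Q) (hQp : Q ≤ p) :
    (p : ℝ) / Q ∈ feasibleRatios (fracGraph p Q) := by
  have : NeZero p := ⟨by omega⟩
  have : Nonempty (fracGraph p Q).V := ⟨(0 : Fin p)⟩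
  let interval (i : Fin p) : Finset (Fin p) :=
    Finset.univ.image fun a : Fin Q => i + Fin.castLE hQp a
  have hcard (i : Fin p) : (interval i).card = Q := by
    rw [Finset.card_image_of_injective (f := fun a : Fin Q => i + Fin.castLE hQp a) _
      ((add_right_injective i).comp (Fin.castLE_injective hQp)), Finset.card_univ,
      Fintype.card_fin]
  have hdisj (i j : Fin p) (hij : i ≠ j) (hadj : ¬ (fracGraph p Q).G.Adj i j) :
      Disjoint (interval i) (interval j) := by
    have hfar : Q ≤ cycDist p i j := not_lt.1 fun hlt => hadj ⟨hij, hlt⟩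
    rw [Finset.disjoint_left]
    rintro _ hx hy
    obtain ⟨a, -, rfl⟩ := Finset.mem_image.1 hx
    obtain ⟨b, -, hb⟩ := Finset.mem_image.1 hy
    exact (cycDist_lt_of_add_eq_add (a := Fin.castLE hQp a) (b := Fin.castLE hQp b) a.2 b.2
      hb.symm).not_ge hfar
  simpa using card_div_mem_feasibleRatios (A := fracGraph p Q) (S := interval) hQ hcard hdisj

end FracGraph

section Shift

variable {E : Type*} [NormedAddCommGroup E] [InnerProductSpace ℂ E] {p q : ℕ} [NeZero p]
  {W : Fin p → Submodule ℂ E}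

theorem IsOrthRep.fracGraph_inf_add_one (hq : 2 ≤ q) (hqp : 2 * q ≤ p)
    (hW : IsOrthRep (fracGraph p q) W) :
    IsOrthRep (fracGraph p (q - 1)) fun i : Fin p => W i ⊓ W (i + 1) := by
  rw [isOrthRep_fracGraph_iff (by omega)] at hW ⊢
  intro i j hij
  rcases le_cycDist_shift_of_sub_one_le hqp hij with h | h | h
  · exact (hW _ _ h).mono inf_le_left inf_le_right
  · exact (hW _ _ h).mono inf_le_right inf_le_left
  · exact (hW _ _ h).mono inf_le_left inf_le_left

theorem IsOrthRep.fracGraph_sup_add_one (hq : 0 < q) (hW : IsOrthRep (fracGraph p q) W) :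
    IsOrthRep (fracGraph p (q + 1)) fun i : Fin p => W i ⊔ W (i + 1) := by
  rw [isOrthRep_fracGraph_iff hq] at hW
  rw [isOrthRep_fracGraph_iff (by omega)]
  intro i j hij
  have hij' : q + 1 ≤ cycDist p (i + 1 : Fin p) (j + 1 : Fin p) := by rwa [cycDist_add_right]
  refine Submodule.isOrtho_sup_left.2 ⟨Submodule.isOrtho_sup_right.2 ⟨?_, ?_⟩,
    Submodule.isOrtho_sup_right.2 ⟨?_, ?_⟩⟩
  · exact hW _ _ (by omega)
  · exact hW _ _ (le_cycDist_add_one_right hij)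
  · exact hW _ _ (le_cycDist_add_one_left hij)
  · exact hW _ _ (by omega)

end Shift

end FinGraph

/-- Induction step: if `2 ≤ q ≤ p/2 - 1` and the complement of the projective rank takes
the expected values on `E_{p/(q-1)}` and `E_{p/(q+1)}`, then it does so on `E_{p/q}`. -/
theorem xibar_fracGraph_induction_step (p q : ℕ) (hq : 2 ≤ q) (hqp : 2 * q + 2 ≤ p)
    (h1 : xibar (fracGraph p (q - 1)) = (p : ℝ) / ((q : ℝ) - 1))
    (h2 : xibar (fracGraph p (q + 1)) = (p : ℝ) / ((q : ℝ) + 1)) :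
    xibar (fracGraph p q) = (p : ℝ) / (q : ℝ) := by
  have : NeZero p := ⟨by omega⟩
  rw [xibar_eq_sInf]
  refine IsLeast.csInf_eq ⟨div_mem_feasibleRatios_fracGraph (by omega) (by omega), ?_⟩
  rintro _ ⟨d, r, -, hr, rfl, W, hW, hrep⟩
  have hq' : (2 : ℝ) ≤ q := by exact_mod_cast hq
  have hinf := sum_finrank_le_of_xibar_fracGraph_eq (by linarith) h1
    (hrep.fracGraph_inf_add_one hq (by omega))
  have hsup := sum_finrank_le_of_xibar_fracGraph_eq (by positivity) h2
    (hrep.fracGraph_sup_add_one (by omega))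
  have hsum := congrArg (Nat.cast (R := ℝ))
    (sum_finrank_inf_add_sum_finrank_sup (ι := Fin p) W (· + 1) hW)
  simp only [Nat.cast_add, Nat.cast_mul, Nat.cast_ofNat, Fintype.card_fin] at hsum
  rw [finrank_euclideanSpace_fin] at hinf hsup
  rw [div_le_div_iff₀ (by positivity) (by exact_mod_cast hr)]
  linarith
end

section
/- Let G be a non-empty vertex-transitive finite simple graph, let d be a positive integer, and let {W_v}_{v ∈ V(G)} be an assignment of subspaces of ℂ^d to the vertices of G such that distinct non-adjacent vertices receive orthogonal subspaces. Then Σ_{v ∈ V(G)} dim W_v ≤ d · |V(G)| / ξ̄_f(G). -/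
open Filter

open FinGraph

/-!
Let `Γ` be the automorphism group of `G`. Given an orthogonal assignment `W` in `ℂ^d`, put
`U_v = ⨁_{σ ∈ Γ} W_{σ v} ≤ ⨁_{σ ∈ Γ} ℂ^d`. This is again an orthogonal assignment, and by
vertex-transitivity every `U_v` has the same dimension `r = |Γ| · Σ_v dim W_v / |V|`. Hence
`ξ̄_f(G) ≤ d |Γ| / r = d |V| / Σ_v dim W_v`.
-/

def SimpleGraph.IsOrthoAssignment {𝕜 V E : Type*} [RCLike 𝕜] [NormedAddCommGroup E]
    [InnerProductSpace 𝕜 E] (G : SimpleGraph V) (W : V → Submodule 𝕜 E) : Prop :=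
  ∀ v w, v ≠ w → ¬ G.Adj v w → ∀ x ∈ W v, ∀ y ∈ W w, inner 𝕜 x y = 0

section OrthoAssignment

variable {𝕜 V : Type*} [RCLike 𝕜] {ι : Type*} [Fintype ι] {E : ι → Type*}
  [∀ i, NormedAddCommGroup (E i)] [∀ i, InnerProductSpace 𝕜 (E i)]

variable (𝕜) in
/-- The subspace `∏ i, p i` of the orthogonal direct sum `PiLp 2 E`. -/
def PiLp.submodule (p : ∀ i, Submodule 𝕜 (E i)) : Submodule 𝕜 (PiLp 2 E) :=
  LinearMap.range ((WithLp.linearEquiv 2 𝕜 (∀ i, E i)).symm.toLinearMap ∘ₗ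
    LinearMap.pi fun i => (p i).subtype ∘ₗ LinearMap.proj i)

theorem PiLp.finrank_submodule [∀ i, FiniteDimensional 𝕜 (E i)] (p : ∀ i, Submodule 𝕜 (E i)) :
    Module.finrank 𝕜 (PiLp.submodule 𝕜 p) = ∑ i, Module.finrank 𝕜 (p i) := by
  rw [PiLp.submodule, LinearMap.finrank_range_of_inj, Module.finrank_pi_fintype]
  intro f g hfg
  funext i
  exact Subtype.ext (congrArg (fun x : PiLp 2 E => x i) hfg)

theorem SimpleGraph.IsOrthoAssignment.piLp {G : SimpleGraph V} {W : ∀ i, V → Submodule 𝕜 (E i)}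
    (hW : ∀ i, G.IsOrthoAssignment (W i)) :
    G.IsOrthoAssignment fun v => PiLp.submodule 𝕜 fun i => W i v := by
  rintro v w hvw hadj _ ⟨f, rfl⟩ _ ⟨g, rfl⟩
  rw [PiLp.inner_apply]
  exact Finset.sum_eq_zero fun i _ => hW i v w hvw hadj _ (f i).2 _ (g i).2

theorem SimpleGraph.IsOrthoAssignment.comp_iso {V' F : Type*} [NormedAddCommGroup F]
    [InnerProductSpace 𝕜 F] {G : SimpleGraph V} {G' : SimpleGraph V'}
    {W : V' → Submodule 𝕜 F} (hW : G'.IsOrthoAssignment W) (e : G ≃g G') :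
    G.IsOrthoAssignment (W ∘ e) := fun v w hvw hadj =>
  hW (e v) (e w) (e.injective.ne hvw) (e.map_adj_iff.not.mpr hadj)

end OrthoAssignment

namespace MulAction

variable {Γ α M : Type*} [Group Γ] [Fintype Γ] [MulAction Γ α] [IsPretransitive Γ α]
  [AddCommMonoid M] (f : α → M)

theorem sum_apply_smul_eq (a b : α) : ∑ g : Γ, f (g • a) = ∑ g : Γ, f (g • b) := by
  obtain ⟨h, rfl⟩ := exists_smul_eq Γ b a
  simp only [smul_smul]
  exact Equiv.sum_comp (Equiv.mulRight h) fun g => f (g • b)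

theorem card_nsmul_sum_apply_smul [Fintype α] (a : α) :
    Fintype.card α • ∑ g : Γ, f (g • a) = Fintype.card Γ • ∑ b, f b := by
  calc Fintype.card α • ∑ g : Γ, f (g • a) = ∑ b : α, ∑ g : Γ, f (g • b) := by
        simp [sum_apply_smul_eq f _ a]
    _ = ∑ g : Γ, ∑ b : α, f (g • b) := Finset.sum_comm
    _ = ∑ _g : Γ, ∑ b, f b := Fintype.sum_congr _ _ fun g => Equiv.sum_comp (toPerm g) f
    _ = Fintype.card Γ • ∑ b, f b := by rw [Finset.sum_const, Finset.card_univ]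

end MulAction

namespace SimpleGraph

variable {V : Type*} (G : SimpleGraph V)

instance : MulAction (G ≃g G) V where
  smul e v := e v
  one_smul _ := rfl
  mul_smul _ _ _ := rfl

instance [Finite V] : Finite (G ≃g G) := Finite.of_injective _ RelIso.toEquiv_injective

end SimpleGraph

namespace FinGraph

variable {A : FinGraph}

theorem IsVertexTransitive.isPretransitive (h : A.IsVertexTransitive) :
    MulAction.IsPretransitive (A.G ≃g A.G) A.V :=
  ⟨h⟩

variable (A) in
def xibarRatios : Set ℝ :=
  { x : ℝ | ∃ d r : ℕ, 0 < d ∧ 0 < r ∧ x = (d : ℝ) / (r : ℝ) ∧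
    ∃ W : A.V → Submodule ℂ (EuclideanSpace ℂ (Fin d)),
      (∀ v, Module.finrank ℂ (W v) = r) ∧ A.G.IsOrthoAssignment W }

theorem xibar_eq_sInf_xibarRatios : xibar A = sInf A.xibarRatios := rfl

theorem nonneg_of_mem_xibarRatios {x : ℝ} (hx : x ∈ A.xibarRatios) : 0 ≤ x := by
  obtain ⟨d, r, -, -, rfl, -⟩ := hx
  positivity

theorem one_le_of_mem_xibarRatios [Nonempty A.V] {x : ℝ} (hx : x ∈ A.xibarRatios) : 1 ≤ x := by
  obtain ⟨d, r, -, hr, rfl, W, hW, -⟩ := hx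
  have hrd : r ≤ d := by
    simpa [hW] using Submodule.finrank_le (W (Classical.arbitrary A.V))
  rw [one_le_div (by positivity)]
  exact_mod_cast hrd

theorem xibar_nonneg : 0 ≤ xibar A := by
  rw [xibar_eq_sInf_xibarRatios]
  exact Real.sInf_nonneg fun _ => nonneg_of_mem_xibarRatios

theorem xibar_le_of_mem_xibarRatios {x : ℝ} (hx : x ∈ A.xibarRatios) : xibar A ≤ x := by
  rw [xibar_eq_sInf_xibarRatios]
  exact csInf_le ⟨0, fun _ => nonneg_of_mem_xibarRatios⟩ hx

theorem one_le_xibar [Nonempty A.V] (h : A.xibarRatios.Nonempty) : 1 ≤ xibar A := by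
  rw [xibar_eq_sInf_xibarRatios]
  exact le_csInf h fun _ => one_le_of_mem_xibarRatios

theorem finrank_div_mem_xibarRatios [Nonempty A.V] {E : Type*} [NormedAddCommGroup E]
    [InnerProductSpace ℂ E] [FiniteDimensional ℂ E] {U : A.V → Submodule ℂ E}
    (hU : A.G.IsOrthoAssignment U) {r : ℕ} (hr : 0 < r)
    (hUr : ∀ v, Module.finrank ℂ (U v) = r) :
    (Module.finrank ℂ E : ℝ) / r ∈ A.xibarRatios := by
  let e := (stdOrthonormalBasis ℂ E).repr
  have hrd : r ≤ Module.finrank ℂ E := hUr (Classical.arbitrary A.V) ▸ Submodule.finrank_le _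
  refine ⟨_, r, hr.trans_le hrd, hr, rfl, fun v => (U v).map (e.toLinearEquiv : E →ₗ[ℂ] _),
    fun v => by rw [LinearEquiv.finrank_map_eq, hUr], ?_⟩
  rintro v w hvw hadj _ ⟨x, hx, rfl⟩ _ ⟨y, hy, rfl⟩
  exact (e.inner_map_map x y).trans (hU v w hvw hadj x hx y hy)

theorem IsVertexTransitive.exists_isOrthoAssignment_finrank_eq {𝕜 E : Type*} [RCLike 𝕜]
    [NormedAddCommGroup E] [InnerProductSpace 𝕜 E] [FiniteDimensional 𝕜 E]
    (hvt : A.IsVertexTransitive) {W : A.V → Submodule 𝕜 E} (hW : A.G.IsOrthoAssignment W)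
    [Fintype (A.G ≃g A.G)] :
    ∃ (U : A.V → Submodule 𝕜 (PiLp 2 fun _ : A.G ≃g A.G => E)) (r : ℕ),
      A.G.IsOrthoAssignment U ∧ (∀ v, Module.finrank 𝕜 (U v) = r) ∧
      Fintype.card A.V * r = Fintype.card (A.G ≃g A.G) * ∑ v, Module.finrank 𝕜 (W v) := by
  have := hvt.isPretransitive
  let f v := Module.finrank 𝕜 (W v)
  let U v := PiLp.submodule 𝕜 fun σ : A.G ≃g A.G => W (σ • v)
  have hU v : Module.finrank 𝕜 (U v) = ∑ σ : A.G ≃g A.G, f (σ • v) :=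
    PiLp.finrank_submodule _
  obtain hV | hV := isEmpty_or_nonempty A.V
  · exact ⟨U, 0, .piLp fun σ => hW.comp_iso σ, hV.elim, by simp⟩
  obtain ⟨v₀⟩ := hV
  refine ⟨U, Module.finrank 𝕜 (U v₀), .piLp fun σ => hW.comp_iso σ, fun v => ?_, ?_⟩
  · rw [hU, hU, MulAction.sum_apply_smul_eq f v v₀]
  · rw [hU, ← smul_eq_mul, MulAction.card_nsmul_sum_apply_smul f v₀, smul_eq_mul]

theorem sum_finrank_le_of_isOrthoAssignment {E : Type*} [NormedAddCommGroup E]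
    [InnerProductSpace ℂ E] [FiniteDimensional ℂ E] (hvt : A.IsVertexTransitive)
    {W : A.V → Submodule ℂ E} (hW : A.G.IsOrthoAssignment W) :
    (∑ v, (Module.finrank ℂ (W v) : ℝ)) ≤
      Module.finrank ℂ E * Fintype.card A.V / xibar A := by
  let _ := Fintype.ofFinite (A.G ≃g A.G)
  rw [← Nat.cast_sum]
  set S := ∑ v, Module.finrank ℂ (W v)
  obtain hS | hS := Nat.eq_zero_or_pos S
  · rw [hS, Nat.cast_zero]
    exact div_nonneg (by positivity) xibar_nonneg
  obtain ⟨v₀, -, -⟩ := Finset.exists_ne_zero_of_sum_ne_zero hS.ne'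
  have : Nonempty A.V := ⟨v₀⟩
  obtain ⟨U, r, hU, hUr, hrS⟩ := hvt.exists_isOrthoAssignment_finrank_eq hW
  have hr : 0 < r := Nat.pos_of_mul_pos_left (hrS ▸ Nat.mul_pos Fintype.card_pos hS)
  have hmem := finrank_div_mem_xibarRatios hU hr hUr
  have hxibar_pos : 0 < xibar A := one_pos.trans_le (one_le_xibar ⟨_, hmem⟩)
  have hxibar_le := xibar_le_of_mem_xibarRatios hmem
  have hD : Module.finrank ℂ (PiLp 2 fun _ : A.G ≃g A.G => E) =
      Fintype.card (A.G ≃g A.G) * Module.finrank ℂ E := by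
    simp [(WithLp.linearEquiv 2 ℂ _).finrank_eq, Module.finrank_pi_fintype]
  have hrS' : (Fintype.card A.V : ℝ) * r = Fintype.card (A.G ≃g A.G) * S := by
    exact_mod_cast hrS
  rw [hD] at hxibar_le
  rw [le_div_iff₀ hxibar_pos]
  calc (S : ℝ) * xibar A
      ≤ S * ((Fintype.card (A.G ≃g A.G) * Module.finrank ℂ E : ℕ) / r) := by gcongr
    _ = Module.finrank ℂ E * Fintype.card A.V := by
      field_simp
      push_cast
      linear_combination -(Module.finrank ℂ E : ℝ) * hrS'

end FinGraph

theorem sum_dim_le_of_orthogonal_assignment_general (A : FinGraph)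
    (hvt : IsVertexTransitive A) (d : ℕ)
    (W : A.V → Submodule ℂ (EuclideanSpace ℂ (Fin d)))
    (horth : ∀ v w : A.V, v ≠ w → ¬ A.G.Adj v w →
      ∀ x ∈ W v, ∀ y ∈ W w, (inner ℂ x y : ℂ) = 0) :
    (∑ v : A.V, (Module.finrank ℂ (W v) : ℝ)) ≤
      (d : ℝ) * (Fintype.card A.V : ℝ) / xibar A := by
  simpa using sum_finrank_le_of_isOrthoAssignment hvt horth

/-- For a non-empty vertex-transitive graph `G` and any orthogonal subspace assignment
`{W_v}` in `ℂ^d`, the total dimension is at most `d·|V(G)| / ξ̄_f(G)`. -/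
theorem sum_dim_le_of_orthogonal_assignment (A : FinGraph) (hne : Nonempty A.V)
    (hvt : IsVertexTransitive A) (d : ℕ) (hd : 0 < d)
    (W : A.V → Submodule ℂ (EuclideanSpace ℂ (Fin d)))
    (horth : ∀ v w : A.V, v ≠ w → ¬ A.G.Adj v w →
      ∀ x ∈ W v, ∀ y ∈ W w, (inner ℂ x y : ℂ) = 0) :
    (∑ v : A.V, (Module.finrank ℂ (W v) : ℝ)) ≤
      (d : ℝ) * (Fintype.card A.V : ℝ) / xibar A :=
  sum_dim_le_of_orthogonal_assignment_general A hvt d W horth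
end

section
/- Let G be a non-empty vertex-transitive finite simple graph, let U ∈ 𝒫(G) be the uniform distribution on its vertices, and let f ∈ Δ(𝒢). Then f(G) = f(G, U), where f(G, U) is the probabilistic refinement of f at the uniform distribution. -/
open Filter

open FinGraph

namespace FinGraph

/-- The empirical distribution of a tuple `x : Fin n → V`. -/
noncomputable def empDist (A : FinGraph) (n : ℕ) (x : Fin n → A.V) (v : A.V) : ℝ :=
  letI : DecidableEq A.V := Classical.decEq _
  ((Finset.univ.filter fun i : Fin n => x i = v).card : ℝ) / (n : ℝ)

/-- The set `T^n_{B_ε(P)}` of `n`-tuples whose empirical distribution is within `ε`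
of `P` in `ℓ1`-norm. -/
def typSet (A : FinGraph) (P : A.V → ℝ) (ε : ℝ) (n : ℕ) : Set (Fin n → A.V) :=
  { x | ∑ v : A.V, |A.empDist n x v - P v| ≤ ε }

/-- The induced subgraph `G^{⊠ n}[T^n_{B_ε(P)}]`, as a bundled finite graph. -/
noncomputable def inducedTypGraph (A : FinGraph) (P : A.V → ℝ) (ε : ℝ) (n : ℕ) :
    FinGraph :=
  letI : Fintype (A.typSet P ε n) := (Set.toFinite _).fintype
  mk' (A.typSet P ε n) (SimpleGraph.induce (A.typSet P ε n) (strongPowAdj A.G n))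

/-- The probabilistic refinement `f(G, P)` of a spectral point `f`:
`inf_{ε>0} limsup_{n→∞} f(G^{⊠n}[T^n_{B_ε(P)}])^{1/n}`. -/
noncomputable def probRefine (A : FinGraph) (f : FinGraph → ℝ) (P : A.V → ℝ) : ℝ :=
  ⨅ ε : {e : ℝ // 0 < e},
    Filter.limsup (fun n : ℕ => f (A.inducedTypGraph P ε.1 n) ^ ((1 : ℝ) / (n : ℝ)))
      Filter.atTop

end FinGraph

/-!
Split `G^{⊠n}` into type classes. There are at most `(n+1)^{|V|}` of them, so a single class
`T_c` carries `f(G)^n` up to a polynomial factor. Concatenating `|Aut G|` elements of `T_c`,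
the `σ`-th one relabelled by `σ⁻¹`, is a cohomomorphism from `T_c^{⊠|Aut G|}` into the
`|Aut G|·n`-tuples of exactly uniform type: by vertex-transitivity `∑_σ c(σ v)` does not
depend on `v`. Taking `n`-th roots, the polynomial factor disappears.
-/

open Finset Filter Topology

instance SimpleGraph.Iso.instFinite {V W : Type*} [Finite V] [Finite W]
    (G : SimpleGraph V) (H : SimpleGraph W) : Finite (G ≃g H) :=
  Finite.of_injective _ RelIso.toEquiv_injective

theorem MulAction.sum_comp_smul_eq_of_isPretransitive {M α β : Type*} [Group M] [Fintype M]
    [MulAction M α] [MulAction.IsPretransitive M α] [AddCommMonoid β] (c : α → β) (a b : α) :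
    ∑ m : M, c (m • a) = ∑ m : M, c (m • b) := by
  obtain ⟨τ, rfl⟩ := MulAction.exists_smul_eq M b a
  simp_rw [smul_smul]
  exact Equiv.sum_comp (Equiv.mulRight τ) fun m => c (m • b)

theorem Filter.limsup_eq_of_eventually_le_of_tendsto_comp {α : Type*}
    [ConditionallyCompleteLinearOrder α] [TopologicalSpace α] [OrderTopology α]
    [DenselyOrdered α] {a : ℕ → α} {φ : ℕ → ℕ} {L : α}
    (hφ : Tendsto φ atTop atTop) (hbdd : IsBoundedUnder (· ≥ ·) atTop a)
    (hle : ∀ᶠ n in atTop, a n ≤ L) (hlim : Tendsto (a ∘ φ) atTop (𝓝 L)) :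
    limsup a atTop = L := by
  refine le_antisymm (limsup_le_of_le hbdd.isCoboundedUnder_flip hle) ?_
  refine le_of_forall_lt_imp_le_of_dense fun b hb => le_limsup_of_frequently_le ?_
    (isBoundedUnder_of_eventually_le hle)
  exact hφ.frequently ((hlim.eventually (lt_mem_nhds hb)).mono fun _ => le_of_lt).frequently

theorem Real.le_rpow_inv_mul_rpow_inv_of_pow_le {x y D : ℝ} {N : ℕ} (hx : 0 ≤ x) (hy : 0 ≤ y)
    (hD : 0 ≤ D) (hN : N ≠ 0) (h : x ^ N ≤ D * y) :
    x ≤ D ^ (N⁻¹ : ℝ) * y ^ (N⁻¹ : ℝ) := by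
  calc x = (x ^ N) ^ (N⁻¹ : ℝ) := (Real.pow_rpow_inv_natCast hx hN).symm
    _ ≤ (D * y) ^ (N⁻¹ : ℝ) := by gcongr
    _ = D ^ (N⁻¹ : ℝ) * y ^ (N⁻¹ : ℝ) := Real.mul_rpow hD hy

theorem tendsto_natCast_add_one_rpow_div_atTop (k : ℝ) :
    Tendsto (fun m : ℕ => ((m : ℝ) + 1) ^ (k / m)) atTop (𝓝 1) := by
  have h := (tendsto_rpow_div_mul_add k 1 (-1) zero_ne_one).comp
    (tendsto_atTop_add_const_right atTop 1 tendsto_natCast_atTop_atTop)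
  refine h.congr fun m => ?_
  simp

section TupleType

variable {ι κ V W : Type*} [Fintype ι] [Fintype κ] [DecidableEq V] [DecidableEq W]

def tupleType (x : ι → V) (v : V) : ℕ := #{i | x i = v}

theorem sum_tupleType [Fintype V] (x : ι → V) : ∑ v, tupleType x v = Fintype.card ι := by
  simp only [tupleType]
  rw [← card_eq_sum_card_fiberwise fun i _ => mem_univ (x i), card_univ]

theorem tupleType_le (x : ι → V) (v : V) : tupleType x v ≤ Fintype.card ι :=
  card_filter_le _ _

theorem tupleType_comp_equiv (x : ι → V) (e : κ ≃ ι) : tupleType (x ∘ e) = tupleType x := by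
  funext v
  exact card_equiv e (by simp)

theorem tupleType_equiv_comp (x : ι → V) (e : V ≃ W) (w : W) :
    tupleType (e ∘ x) w = tupleType x (e.symm w) := by
  simp only [tupleType, Function.comp_apply, Equiv.eq_symm_apply]

theorem tupleType_uncurry (x : ι → κ → V) (v : V) :
    tupleType (Function.uncurry x) v = ∑ i, tupleType (x i) v := by
  simp only [tupleType, card_filter, Fintype.sum_prod_type, Function.uncurry_apply_pair]
  rfl

end TupleType

namespace FinGraph

/-- Reducible, so that `(B.induceSet S).V` is syntactically the subtype `↥S`. -/
noncomputable abbrev induceSet (B : FinGraph) (S : Set B.V) : FinGraph :=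
  { V := S, fintypeV := (Set.toFinite S).fintype, G := B.G.induce S }

theorem inducedTypGraph_eq_induceSet (A : FinGraph) (P : A.V → ℝ) (ε : ℝ) (n : ℕ) :
    A.inducedTypGraph P ε n = (A.spow n).induceSet (A.typSet P ε n) := rfl

theorem strongPowAdj_adj_or_eq_iff {V : Type} {G : SimpleGraph V} {n : ℕ} {x y : Fin n → V} :
    (strongPowAdj G n).Adj x y ∨ x = y ↔ ∀ i, G.Adj (x i) (y i) ∨ x i = y i := by
  refine ⟨?_, fun h => (em (x = y)).symm.imp (fun hne => ⟨hne, h⟩) id⟩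
  rintro (⟨-, h⟩ | rfl)
  exacts [h, fun _ => Or.inr rfl]

theorem strongProdAdj_adj_or_eq_iff {α β : Type} {G : SimpleGraph α} {H : SimpleGraph β}
    {x y : α × β} :
    (strongProdAdj G H).Adj x y ∨ x = y ↔
      (G.Adj x.1 y.1 ∨ x.1 = y.1) ∧ (H.Adj x.2 y.2 ∨ x.2 = y.2) := by
  refine ⟨?_, fun h => (em (x = y)).symm.imp (fun hne => ⟨hne, h⟩) id⟩
  rintro (⟨-, h⟩ | rfl)
  exacts [h, ⟨Or.inr rfl, Or.inr rfl⟩]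

/-- Strong products are most easily compared through the reflexive closures of adjacency. -/
def isoOfAdjOrEq {V W : Type} {G : SimpleGraph V} {H : SimpleGraph W} (e : V ≃ W)
    (he : ∀ x y, H.Adj (e x) (e y) ∨ e x = e y ↔ G.Adj x y ∨ x = y) : G ≃g H where
  toEquiv := e
  map_rel_iff' {x y} := by
    have := he x y
    rw [e.apply_eq_iff_eq] at this
    rw [← and_iff_left_of_imp H.ne_of_adj, ← and_iff_left_of_imp G.ne_of_adj, ne_eq,
      e.apply_eq_iff_eq]
    tauto

def spowSuccIso (A : FinGraph) (n : ℕ) : (A.spow (n + 1)).G ≃g (A.sprod (A.spow n)).G :=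
  isoOfAdjOrEq (G := strongPowAdj A.G (n + 1)) (H := strongProdAdj A.G (strongPowAdj A.G n))
    (Fin.consEquiv fun _ => A.V).symm fun x y => by
      rw [strongProdAdj_adj_or_eq_iff, strongPowAdj_adj_or_eq_iff, strongPowAdj_adj_or_eq_iff,
        Fin.forall_fin_succ]
      rfl

def spowZeroIso (A : FinGraph) : (A.spow 0).G ≃g (edgeless 1).G :=
  isoOfAdjOrEq (G := strongPowAdj A.G 0) (H := (⊥ : SimpleGraph (Fin 1))) (Equiv.ofUnique _ _)
    fun _ _ => iff_of_true (Or.inr (Subsingleton.elim _ _)) (Or.inr (Subsingleton.elim _ _))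

theorem cohomLE_of_injective {A B : FinGraph} (φ : A.V → B.V) (hφ : Function.Injective φ)
    (hadj : ∀ a b, B.G.Adj (φ a) (φ b) → A.G.Adj a b) : cohomLE A B :=
  ⟨⟨φ, fun {_ _} hab => ⟨hφ.ne hab.1, fun h => hab.2 (hadj _ _ h)⟩⟩⟩

theorem cohomLE_of_iso {A B : FinGraph} (e : A.G ≃g B.G) : cohomLE A B :=
  cohomLE_of_injective e e.injective fun _ _ => e.map_adj_iff.1

theorem cohomLE_of_isEmpty (A B : FinGraph) [IsEmpty A.V] : cohomLE A B :=
  cohomLE_of_injective isEmptyElim isEmptyElim isEmptyElim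

theorem induceSet_cohomLE (B : FinGraph) (S : Set B.V) : cohomLE (B.induceSet S) B :=
  cohomLE_of_injective Subtype.val Subtype.val_injective fun _ _ => id

end FinGraph

namespace FinGraph.Delta

variable {f : FinGraph → ℝ}

theorem nonneg (hf : f ∈ Delta) (A : FinGraph) : 0 ≤ f A := hf.1 A

theorem mono (hf : f ∈ Delta) {A B : FinGraph} (h : cohomLE A B) : f A ≤ f B :=
  hf.2.2.2.2 A B h

theorem eq_of_iso (hf : f ∈ Delta) {A B : FinGraph} (e : A.G ≃g B.G) : f A = f B :=
  (mono hf (cohomLE_of_iso e)).antisymm (mono hf (cohomLE_of_iso e.symm))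

theorem eq_zero_of_isEmpty (hf : f ∈ Delta) (A : FinGraph) [IsEmpty A.V] : f A = 0 := by
  have h := mono hf (cohomLE_of_isEmpty A (edgeless 0))
  rw [hf.2.1 0, Nat.cast_zero] at h
  exact h.antisymm (nonneg hf A)

theorem map_spow (hf : f ∈ Delta) (A : FinGraph) (n : ℕ) : f (A.spow n) = f A ^ n := by
  induction n with
  | zero => rw [eq_of_iso hf (spowZeroIso A), hf.2.1 1, Nat.cast_one, pow_zero]
  | succ n ih => rw [eq_of_iso hf (spowSuccIso A n), hf.2.2.1, ih, pow_succ, mul_comm]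

theorem le_add_compl (hf : f ∈ Delta) (B : FinGraph) (T : Set B.V) :
    f B ≤ f (B.induceSet T) + f (B.induceSet Tᶜ) := by
  classical
  rw [← hf.2.2.2.1]
  refine mono hf (cohomLE_of_injective (Equiv.Set.sumCompl T).symm (Equiv.injective _) ?_)
  rintro v w (⟨a, b, ha, hb, hab⟩ | ⟨a, b, ha, hb, hab⟩) <;>
    rw [Equiv.symm_apply_eq] at ha hb <;>
    simp only [Equiv.Set.sumCompl_apply_inl, Equiv.Set.sumCompl_apply_inr] at ha hb <;>
    subst ha hb <;> exact hab

theorem le_sum_induceSet_fiber (hf : f ∈ Delta) {I : Type} [DecidableEq I] (s : Finset I) :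
    ∀ (B : FinGraph) (t : B.V → I), (∀ v, t v ∈ s) →
      f B ≤ ∑ i ∈ s, f (B.induceSet {v | t v = i}) := by
  induction s using Finset.induction with
  | empty =>
    intro B t ht
    have : IsEmpty B.V := ⟨fun v => notMem_empty _ (ht v)⟩
    rw [eq_zero_of_isEmpty hf B, sum_empty]
  | insert a s ha ih =>
    intro B t ht
    set B' := B.induceSet {v | t v = a}ᶜ
    have hB' : f B' ≤ ∑ i ∈ s, f (B.induceSet {v | t v = i}) := by
      refine (ih B' (fun w => t w.1) fun w => ?_).trans (sum_le_sum fun i hi => mono hf ?_)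
      · exact (mem_insert.1 (ht w.1)).resolve_left w.2
      · refine cohomLE_of_injective (fun w => ⟨w.1.1, w.2⟩) (fun w w' h => ?_) fun _ _ => id
        exact Subtype.ext (Subtype.ext (congrArg Subtype.val h :))
    rw [sum_insert ha]
    linarith [le_add_compl hf B {v | t v = a}]

theorem exists_le_card_mul_induceSet_fiber (hf : f ∈ Delta) (B : FinGraph) {I : Type}
    [DecidableEq I] (t : B.V → I) (s : Finset I) (hs : s.Nonempty) (ht : ∀ v, t v ∈ s) :
    ∃ i ∈ s, f B ≤ #s * f (B.induceSet {v | t v = i}) := by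
  obtain ⟨i, hi, hmax⟩ := exists_max_image s (fun i => f (B.induceSet {v | t v = i})) hs
  refine ⟨i, hi, (le_sum_induceSet_fiber hf s B t ht).trans ?_⟩
  simpa using sum_le_card_nsmul s _ _ hmax

end FinGraph.Delta

namespace FinGraph

theorem IsVertexTransitive.isPretransitive_s10 {A : FinGraph} (hvt : IsVertexTransitive A) :
    MulAction.IsPretransitive (A.G ≃g A.G) A.V :=
  ⟨hvt⟩

variable (A : FinGraph)

theorem empDist_eq_tupleType [DecidableEq A.V] {n : ℕ} (x : Fin n → A.V) (v : A.V) :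
    A.empDist n x v = tupleType x v / n := by
  simp only [empDist, tupleType]
  congr

theorem empDist_eq_inv_card_of_tupleType_eq [DecidableEq A.V] {N : ℕ} (hN : 0 < N)
    (x : Fin N → A.V) (hx : ∀ v w, tupleType x v = tupleType x w) (v : A.V) :
    A.empDist N x v = 1 / Fintype.card A.V := by
  have hsum : tupleType x v * Fintype.card A.V = N :=
    calc _ = ∑ w, tupleType x w := by simp [hx _ v, mul_comm]
      _ = N := by rw [sum_tupleType, Fintype.card_fin]
  have hk : (Fintype.card A.V : ℝ) ≠ 0 := by
    rintro h
    rw [Nat.cast_eq_zero.1 h, mul_zero] at hsum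
    omega
  rw [empDist_eq_tupleType, div_eq_div_iff (by positivity) hk, one_mul]
  exact_mod_cast hsum

theorem mem_typSet_uniform_of_tupleType_eq [DecidableEq A.V] {ε : ℝ} (hε : 0 ≤ ε) {N : ℕ}
    (hN : 0 < N) (x : Fin N → A.V) (hx : ∀ v w, tupleType x v = tupleType x w) :
    x ∈ A.typSet (fun _ => 1 / (Fintype.card A.V : ℝ)) ε N := by
  simp [typSet, empDist_eq_inv_card_of_tupleType_eq A hN x hx, hε]

def relabelConcat {g n : ℕ} (σ : Fin g → A.G ≃g A.G) (y : Fin g → Fin n → A.V) :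
    Fin (g * n) → A.V :=
  Function.uncurry (fun j i => (σ j).symm (y j i)) ∘ finProdFinEquiv.symm

theorem relabelConcat_finProdFinEquiv {g n : ℕ} (σ : Fin g → A.G ≃g A.G)
    (y : Fin g → Fin n → A.V) (j : Fin g) (i : Fin n) :
    A.relabelConcat σ y (finProdFinEquiv (j, i)) = (σ j).symm (y j i) := by
  simp [relabelConcat]

theorem relabelConcat_injective {g n : ℕ} (σ : Fin g → A.G ≃g A.G) :
    Function.Injective (A.relabelConcat (n := n) σ) := fun y y' h => by
  funext j i
  simpa [relabelConcat_finProdFinEquiv] using congrFun h (finProdFinEquiv (j, i))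

theorem tupleType_relabelConcat [DecidableEq A.V] {g n : ℕ} (σ : Fin g → A.G ≃g A.G)
    (y : Fin g → Fin n → A.V) (v : A.V) :
    tupleType (A.relabelConcat σ y) v = ∑ j, tupleType (y j) (σ j v) := by
  rw [relabelConcat, tupleType_comp_equiv, tupleType_uncurry]
  exact sum_congr rfl fun j _ => tupleType_equiv_comp (y j) (σ j).symm.toEquiv v

theorem strongPowAdj_of_relabelConcat {g n : ℕ} (σ : Fin g → A.G ≃g A.G)
    {y y' : Fin g → Fin n → A.V}
    (h : (strongPowAdj A.G (g * n)).Adj (A.relabelConcat σ y) (A.relabelConcat σ y'))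
    (j : Fin g) : (strongPowAdj A.G n).Adj (y j) (y' j) ∨ y j = y' j := by
  refine strongPowAdj_adj_or_eq_iff.2 fun i => ?_
  have hji := h.2 (finProdFinEquiv (j, i))
  rwa [relabelConcat_finProdFinEquiv, relabelConcat_finProdFinEquiv, (σ j).symm.map_adj_iff,
    (σ j).symm.apply_eq_iff_eq] at hji

theorem cohomLE_spow_induceSet_tupleType_eq [DecidableEq A.V] (hvt : IsVertexTransitive A)
    {g n : ℕ} (σ : Fin g ≃ (A.G ≃g A.G)) (hn : 0 < n) {ε : ℝ} (hε : 0 ≤ ε) (c : A.V → ℕ) :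
    cohomLE (((A.spow n).induceSet {x | tupleType x = c}).spow g)
      (A.inducedTypGraph (fun _ => 1 / (Fintype.card A.V : ℝ)) ε (g * n)) := by
  let := Fintype.ofEquiv _ σ
  have := hvt.isPretransitive_s10
  have hg : 0 < g := Fin.pos_iff_nonempty.2 ⟨σ.symm 1⟩
  have hbalanced (y : Fin g → {x : Fin n → A.V | tupleType x = c}) (v w : A.V) :
      tupleType (A.relabelConcat σ fun j => (y j).1) v =
        tupleType (A.relabelConcat σ fun j => (y j).1) w := by
    have hy (j : Fin g) : tupleType (y j).1 = c := (y j).2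
    simp only [tupleType_relabelConcat, hy]
    rw [σ.sum_comp (fun τ => c (τ v)), σ.sum_comp (fun τ => c (τ w))]
    exact MulAction.sum_comp_smul_eq_of_isPretransitive c v w
  rw [inducedTypGraph_eq_induceSet]
  refine cohomLE_of_injective
    (fun y => ⟨A.relabelConcat σ fun j => (y j).1,
      A.mem_typSet_uniform_of_tupleType_eq hε (Nat.mul_pos hg hn) _ (hbalanced y)⟩)
    (fun y y' h => ?_) fun y y' h => ?_
  · have hval : (fun j => (y j).1) = fun j => (y' j).1 :=
      A.relabelConcat_injective σ (Subtype.ext_iff.1 h)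
    exact funext fun j => Subtype.ext (congrFun hval j)
  · refine ⟨?_, fun j => (A.strongPowAdj_of_relabelConcat σ (y := fun j => (y j).1)
      (y' := fun j => (y' j).1) h j).imp id Subtype.ext⟩
    rintro rfl
    exact h.ne rfl

end FinGraph

namespace FinGraph.Delta

variable {f : FinGraph → ℝ}

theorem rpow_inducedTypGraph_le (hf : f ∈ Delta) (A : FinGraph) (P : A.V → ℝ) (ε : ℝ) {n : ℕ}
    (hn : n ≠ 0) : f (A.inducedTypGraph P ε n) ^ ((1 : ℝ) / n) ≤ f A := by
  have h : f (A.inducedTypGraph P ε n) ≤ f A ^ n := by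
    rw [← map_spow hf, inducedTypGraph_eq_induceSet]
    exact mono hf (induceSet_cohomLE _ _)
  calc f (A.inducedTypGraph P ε n) ^ ((1 : ℝ) / n) ≤ (f A ^ n) ^ ((n : ℝ)⁻¹) := by
        rw [one_div]
        gcongr
        exact nonneg hf _
    _ = f A := Real.pow_rpow_inv_natCast (nonneg hf A) hn

theorem pow_le_mul_inducedTypGraph_uniform (hf : f ∈ Delta) (A : FinGraph)
    (hvt : IsVertexTransitive A) {n : ℕ} (hn : 0 < n) {ε : ℝ} (hε : 0 ≤ ε) :
    f A ^ (Nat.card (A.G ≃g A.G) * n) ≤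
      ((n : ℝ) + 1) ^ (Fintype.card A.V * Nat.card (A.G ≃g A.G)) *
        f (A.inducedTypGraph (fun _ => 1 / (Fintype.card A.V : ℝ)) ε
          (Nat.card (A.G ≃g A.G) * n)) := by
  classical
  set g := Nat.card (A.G ≃g A.G)
  set types := Fintype.piFinset fun _ : A.V => range (n + 1)
  have hcard : #types = (n + 1) ^ Fintype.card A.V := by simp [types]
  obtain ⟨c, -, hc⟩ := exists_le_card_mul_induceSet_fiber hf (A.spow n) tupleType types
    ⟨0, by simp [types]⟩ fun x => Fintype.mem_piFinset.2 fun v =>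
      mem_range.2 (Nat.lt_succ_of_le ((tupleType_le x v).trans (Fintype.card_fin n).le))
  have hclass := mono hf
    (A.cohomLE_spow_induceSet_tupleType_eq hvt (Finite.equivFin _).symm hn hε c)
  rw [map_spow hf] at hclass
  calc f A ^ (g * n) = f (A.spow n) ^ g := by rw [map_spow hf, ← pow_mul, mul_comm]
    _ ≤ (#types * f ((A.spow n).induceSet {x | tupleType x = c})) ^ g := by
        gcongr
        exact nonneg hf _
    _ = ((n : ℝ) + 1) ^ (Fintype.card A.V * g) *
          f ((A.spow n).induceSet {x | tupleType x = c}) ^ g := by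
        rw [hcard, mul_pow, pow_mul]
        push_cast
        rfl
    _ ≤ _ := by gcongr

theorem le_rpow_mul_rpow_inducedTypGraph_uniform (hf : f ∈ Delta) (A : FinGraph)
    (hvt : IsVertexTransitive A) {m : ℕ} (hm : 0 < m) {ε : ℝ} (hε : 0 ≤ ε) :
    f A ≤ ((m : ℝ) + 1) ^ ((Fintype.card A.V : ℝ) / m) *
      f (A.inducedTypGraph (fun _ => 1 / (Fintype.card A.V : ℝ)) ε
        (Nat.card (A.G ≃g A.G) * m)) ^ ((1 : ℝ) / (Nat.card (A.G ≃g A.G) * m : ℕ)) := by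
  have hg : 0 < Nat.card (A.G ≃g A.G) := Nat.card_pos
  have h := Real.le_rpow_inv_mul_rpow_inv_of_pow_le (nonneg hf A) (nonneg hf _)
    (by positivity) (Nat.mul_pos hg hm).ne' (pow_le_mul_inducedTypGraph_uniform hf A hvt hm hε)
  rw [one_div ((Nat.card (A.G ≃g A.G) * m : ℕ) : ℝ)]
  convert h using 2
  rw [← Real.rpow_natCast, ← Real.rpow_mul (by positivity)]
  congr 1
  push_cast
  field_simp

theorem limsup_inducedTypGraph_uniform (hf : f ∈ Delta) (A : FinGraph)
    (hvt : IsVertexTransitive A) {ε : ℝ} (hε : 0 ≤ ε) :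
    limsup (fun n : ℕ =>
      f (A.inducedTypGraph (fun _ => 1 / (Fintype.card A.V : ℝ)) ε n) ^ ((1 : ℝ) / n)) atTop =
      f A := by
  have hg : 0 < Nat.card (A.G ≃g A.G) := Nat.card_pos
  have hlower : Tendsto (fun m : ℕ => f A / ((m : ℝ) + 1) ^ ((Fintype.card A.V : ℝ) / m))
      atTop (𝓝 (f A)) := by
    have := (tendsto_const_nhds (x := f A)).div
      (tendsto_natCast_add_one_rpow_div_atTop (Fintype.card A.V)) one_ne_zero
    rwa [div_one] at this
  refine limsup_eq_of_eventually_le_of_tendsto_comp (φ := (Nat.card (A.G ≃g A.G) * ·))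
    (tendsto_id.const_mul_atTop' hg)
    (isBoundedUnder_of ⟨0, fun _ => Real.rpow_nonneg (nonneg hf _) _⟩)
    ((eventually_ne_atTop 0).mono fun n hn => rpow_inducedTypGraph_le hf A _ ε hn)
    (tendsto_of_tendsto_of_tendsto_of_le_of_le' hlower tendsto_const_nhds ?_ ?_)
  · filter_upwards [eventually_gt_atTop 0] with m hm
    rw [div_le_iff₀' (by positivity)]
    exact le_rpow_mul_rpow_inducedTypGraph_uniform hf A hvt hm hε
  · filter_upwards [eventually_gt_atTop 0] with m hm
    exact rpow_inducedTypGraph_le hf A _ ε (Nat.mul_pos hg hm).ne'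

end FinGraph.Delta

theorem spectral_point_eq_probRefine_uniform_general (A : FinGraph)
    (hvt : IsVertexTransitive A) (f : FinGraph → ℝ) (hf : f ∈ Delta) :
    f A = A.probRefine f (fun _ => 1 / (Fintype.card A.V : ℝ)) := by
  have hlimsup (ε : {e : ℝ // 0 < e}) := Delta.limsup_inducedTypGraph_uniform hf A hvt ε.2.le
  simp only [probRefine, hlimsup, ciInf_const]

/-- For a non-empty vertex-transitive graph `G`, any spectral point `f ∈ Δ(𝒢)` satisfies
`f(G) = f(G, U)`, where `U` is the uniform distribution on the vertices. -/
theorem spectral_point_eq_probRefine_uniform (A : FinGraph) (hne : Nonempty A.V)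
    (hvt : IsVertexTransitive A) (f : FinGraph → ℝ) (hf : f ∈ Delta) :
    f A = A.probRefine f (fun _ => 1 / (Fintype.card A.V : ℝ)) :=
  spectral_point_eq_probRefine_uniform_general A hvt f hf
end
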